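/- arXiv:1705.04093 — 10 statements merged into one kernel-verified Lean document; each statement's English description precedes it below -/
import Mathlib

section
/- Let W be a real k×r matrix. Then W has rank r and satisfies Zᵀ W = Zᵀ Z if and only if there exists a matrix X ∈ ℝ^{(k−r)×r} with W = Z + Z_⊥ X; moreover such X is unique (i.e., the map X ↦ Z + Z_⊥ X is a bijection from ℝ^{(k−r)×r} onto the affine cross section S_Z := {W ∈ ℝ^{k×r} : rank W = r and ZᵀW = ZᵀZ}). -/
open Matrix

/-- `W` has rank `r` and satisfies `Zᵀ W = Zᵀ Z` iff there is a unique
`X ∈ ℝ^{(k-r)×r}` with `W = Z + Z_⊥ X`. -/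
theorem stmt0 (k r : ℕ) (hr : 0 < r) (hrk : r < k)
    (Z : Matrix (Fin k) (Fin r) ℝ) (hZ : Z.rank = r)
    (Zperp : Matrix (Fin k) (Fin (k - r)) ℝ) (hZperp : Zperp.rank = k - r)
    (horth : Zᵀ * Zperp = 0)
    (W : Matrix (Fin k) (Fin r) ℝ) :
    (W.rank = r ∧ Zᵀ * W = Zᵀ * Z) ↔
      ∃! X : Matrix (Fin (k - r)) (Fin r) ℝ, W = Z + Zperp * X := by
  -- injectivity of Zperp.mulVecLin
  have hkerperp : LinearMap.ker Zperp.mulVecLin = ⊥ := by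
    have h1 := Zperp.mulVecLin.finrank_range_add_finrank_ker
    rw [Module.finrank_fintype_fun_eq_card, Fintype.card_fin] at h1
    have : Matrix.rank Zperp + Module.finrank ℝ (LinearMap.ker Zperp.mulVecLin) = k - r := by
      simpa [Matrix.rank] using h1
    rw [hZperp] at this
    have h0 : Module.finrank ℝ (LinearMap.ker Zperp.mulVecLin) = 0 := by omega
    exact Submodule.finrank_eq_zero.mp h0
  have hinj : Function.Injective Zperp.mulVecLin := LinearMap.ker_eq_bot.mp hkerperp
  constructor
  · rintro ⟨hWrank, hWZ⟩
    -- ker (Zᵀ).mulVecLin = range Zperp.mulVecLin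
    have hle : LinearMap.range Zperp.mulVecLin ≤ LinearMap.ker (Zᵀ).mulVecLin := by
      rintro v ⟨u, rfl⟩
      simp only [LinearMap.mem_ker, mulVecLin_apply, mulVec_mulVec, horth, zero_mulVec]
    have hrankZt : (Zᵀ).rank = r := by rw [Matrix.rank_transpose, hZ]
    have hdimker : Module.finrank ℝ (LinearMap.ker (Zᵀ).mulVecLin) = k - r := by
      have h1 := (Zᵀ).mulVecLin.finrank_range_add_finrank_ker
      rw [Module.finrank_fintype_fun_eq_card, Fintype.card_fin] at h1
      have : Matrix.rank Zᵀ + Module.finrank ℝ (LinearMap.ker (Zᵀ).mulVecLin) = k := by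
        simpa [Matrix.rank] using h1
      rw [hrankZt] at this
      omega
    have hdimrange : Module.finrank ℝ (LinearMap.range Zperp.mulVecLin) = k - r := hZperp
    have heq : LinearMap.range Zperp.mulVecLin = LinearMap.ker (Zᵀ).mulVecLin :=
      Submodule.eq_of_le_of_finrank_le hle (by rw [hdimker, hdimrange])
    -- columns of W - Z are in ker Zᵀ
    have hcol : ∀ j : Fin r, ∃ x : Fin (k - r) → ℝ,
        Zperp.mulVec x = fun i => (W - Z) i j := by
      intro j
      have hmem : (fun i => (W - Z) i j) ∈ LinearMap.ker (Zᵀ).mulVecLin := by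
        rw [LinearMap.mem_ker]
        funext i
        have : (Zᵀ * (W - Z)) i j = 0 := by
          rw [Matrix.mul_sub, hWZ, sub_self]; rfl
        rw [Matrix.mul_apply] at this
        simp only [mulVecLin_apply, mulVec, dotProduct, Matrix.transpose_apply,
          Matrix.sub_apply, Pi.zero_apply]
        simpa using this
      rw [← heq] at hmem
      obtain ⟨x, hx⟩ := hmem
      exact ⟨x, hx⟩
    choose x hx using hcol
    refine ⟨Matrix.of fun i j => x j i, ?_, ?_⟩
    · funext i j
      have := congrFun (hx j) i
      simp only [mulVec, dotProduct] at this
      simp only [Matrix.add_apply, Matrix.mul_apply, Matrix.of_apply]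
      simp only [Matrix.sub_apply] at this
      linarith [this]
    · intro X hX
      funext i j
      have h1 : Zperp.mulVec (fun l => X l j) = fun i => (W - Z) i j := by
        funext i'
        have := congrFun (congrFun hX i') j
        simp only [Matrix.add_apply, Matrix.mul_apply] at this
        simp only [mulVec, dotProduct, Matrix.sub_apply]
        linarith [this]
      have h2 : Zperp.mulVecLin (fun l => X l j) = Zperp.mulVecLin (fun l => x j l) := by
        simp only [mulVecLin_apply]
        rw [h1, hx j]
      have := hinj h2
      exact congrFun this i
  · rintro ⟨X, rfl, -⟩
    constructor
    · -- rank
      have h1 : Zᵀ * (Z + Zperp * X) = Zᵀ * Z := by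
        rw [Matrix.mul_add, ← Matrix.mul_assoc, horth, Matrix.zero_mul, add_zero]
      have h2 : (Zᵀ * (Z + Zperp * X)).rank = r := by
        rw [h1, Matrix.rank_transpose_mul_self, hZ]
      have h3 := Matrix.rank_mul_le_right Zᵀ (Z + Zperp * X)
      have h4 := Matrix.rank_le_width (Z + Zperp * X)
      omega
    · rw [Matrix.mul_add, ← Matrix.mul_assoc, horth, Matrix.zero_mul, add_zero]
end

section
/- Let X and X' be matrices in ℝ^{(k−r)×r}. If the column spaces of Z + Z_⊥ X and of Z + Z_⊥ X' coincide (i.e., the ranges of the associated linear maps ℝ^r → ℝ^k are equal), then X = X' (equivalently Z + Z_⊥X = Z + Z_⊥X'); that is, the column-space map is injective on the affine cross section S_Z = {Z + Z_⊥X : X ∈ ℝ^{(k−r)×r}}. -/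
open Matrix

lemma mulVecLin_injective_of_rank {m n : ℕ} (M : Matrix (Fin m) (Fin n) ℝ)
    (hM : M.rank = n) : Function.Injective M.mulVecLin := by
  rw [← LinearMap.ker_eq_bot]
  have h1 := M.mulVecLin.finrank_range_add_finrank_ker
  rw [show Module.finrank ℝ (Fin n → ℝ) = n by simp] at h1
  rw [Matrix.rank] at hM
  have : Module.finrank ℝ (LinearMap.ker M.mulVecLin) = 0 := by omega
  exact Submodule.finrank_eq_zero.mp this

lemma mul_cancel_of_rank {m n p : ℕ} (M : Matrix (Fin m) (Fin n) ℝ)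
    (hM : M.rank = n) (B C : Matrix (Fin n) (Fin p) ℝ) (h : M * B = M * C) :
    B = C := by
  have hinj := mulVecLin_injective_of_rank M hM
  ext i j
  have h1 : (M * B) *ᵥ Pi.single j 1 = (M * C) *ᵥ Pi.single j 1 := by rw [h]
  rw [← Matrix.mulVec_mulVec, ← Matrix.mulVec_mulVec] at h1
  have h2 : B *ᵥ Pi.single j 1 = C *ᵥ Pi.single j 1 := hinj h1
  have := congrFun h2 i
  simpa using this

/-- the column-space map is injective on the affine cross section `S_Z`. -/
theorem stmt2 (k r : ℕ) (hr : 0 < r) (hrk : r < k)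
    (Z : Matrix (Fin k) (Fin r) ℝ) (hZ : Z.rank = r)
    (Zperp : Matrix (Fin k) (Fin (k - r)) ℝ) (hZperp : Zperp.rank = k - r)
    (horth : Zᵀ * Zperp = 0)
    (X X' : Matrix (Fin (k - r)) (Fin r) ℝ)
    (h : LinearMap.range (Z + Zperp * X).mulVecLin
        = LinearMap.range (Z + Zperp * X').mulVecLin) :
    X = X' := by
  -- ZᵀZ has rank r
  have hZtZ : (Zᵀ * Z).rank = r := by rw [Matrix.rank_transpose_mul_self, hZ]
  -- get A with (Z + Zperp * X') = (Z + Zperp * X) * A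
  have hcol : ∀ j : Fin r, ∃ y : Fin r → ℝ,
      (Z + Zperp * X) *ᵥ y = fun i => (Z + Zperp * X') i j := by
    intro j
    have : (fun i => (Z + Zperp * X') i j) ∈ LinearMap.range (Z + Zperp * X').mulVecLin := by
      exact ⟨Pi.single j 1, by rw [Matrix.mulVecLin_apply, Matrix.mulVec_single_one]; rfl⟩
    rw [← h] at this
    obtain ⟨y, hy⟩ := this
    exact ⟨y, hy⟩
  choose A hA using hcol
  set M : Matrix (Fin r) (Fin r) ℝ := Matrix.of (fun i j => A j i) with hMdef
  have hfac : (Z + Zperp * X) * M = Z + Zperp * X' := by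
    ext i j
    have := congrFun (hA j) i
    simpa [Matrix.mul_apply, Matrix.mulVec, dotProduct, hMdef, mul_comm] using this
  -- multiply by Zᵀ
  have hZt : Zᵀ * (Z + Zperp * X) = Zᵀ * Z := by
    rw [Matrix.mul_add, ← Matrix.mul_assoc, horth, Matrix.zero_mul, add_zero]
  have hZt' : Zᵀ * (Z + Zperp * X') = Zᵀ * Z := by
    rw [Matrix.mul_add, ← Matrix.mul_assoc, horth, Matrix.zero_mul, add_zero]
  have hZtM : (Zᵀ * Z) * M = (Zᵀ * Z) * 1 := by
    calc (Zᵀ * Z) * M = (Zᵀ * (Z + Zperp * X)) * M := by rw [hZt]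
      _ = Zᵀ * ((Z + Zperp * X) * M) := by rw [Matrix.mul_assoc]
      _ = Zᵀ * (Z + Zperp * X') := by rw [hfac]
      _ = (Zᵀ * Z) * 1 := by rw [hZt', Matrix.mul_one]
  have hM1 : M = 1 := mul_cancel_of_rank (Zᵀ * Z) hZtZ M 1 hZtM
  rw [hM1, Matrix.mul_one] at hfac
  have hperp : Zperp * X = Zperp * X' := by
    exact add_left_cancel hfac
  exact mul_cancel_of_rank Zperp hZperp X X' hperp
end

section
/- Let X ∈ ℝ^{(k−r)×r} and suppose the r×r matrix G := Z̃⁺(Z + Z_⊥X) is invertible. Set X̃ := Z̃_⊥⁺(Z + Z_⊥X)G⁻¹ ∈ ℝ^{(k−r)×r}. Then Z + Z_⊥X = (Z̃ + Z̃_⊥X̃)·G, and in particular the column spaces of Z + Z_⊥X and Z̃ + Z̃_⊥X̃ coincide; i.e., the transition map between the Grassmann charts at Z and Z̃ is given by X ↦ Z̃_⊥⁺(Z + Z_⊥X)(Z̃⁺(Z + Z_⊥X))⁻¹. -/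
open Matrix

lemma aux_isUnit_of_rank {n : ℕ} (A : Matrix (Fin n) (Fin n) ℝ) (h : A.rank = n) :
    IsUnit A := by
  have htop : LinearMap.range A.mulVecLin = ⊤ := by
    apply Submodule.eq_top_of_finrank_eq
    rw [← Matrix.rank, h, Module.finrank_fin_fun]
  have hsurj : Function.Surjective A.mulVecLin := LinearMap.range_eq_top.mp htop
  have hinj : Function.Injective A.mulVecLin := LinearMap.injective_iff_surjective.mpr hsurj
  have hdet : A.det ≠ 0 := by
    intro hd
    obtain ⟨v, hv, hv0⟩ := (Matrix.exists_mulVec_eq_zero_iff).mpr hd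
    exact hv (hinj (by simpa using hv0))
  exact (Matrix.isUnit_iff_isUnit_det A).mpr (isUnit_iff_ne_zero.mpr hdet)

/-- the transition map between the Grassmann charts at `Z` and `Z̃`. -/
theorem stmt3 (k r : ℕ) (hr : 0 < r) (hrk : r < k)
    (Z Zt : Matrix (Fin k) (Fin r) ℝ) (hZ : Z.rank = r) (hZt : Zt.rank = r)
    (Zperp Ztperp : Matrix (Fin k) (Fin (k - r)) ℝ)
    (hZperp : Zperp.rank = k - r) (hZtperp : Ztperp.rank = k - r)
    (horth : Zᵀ * Zperp = 0) (horth' : Ztᵀ * Ztperp = 0)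
    (X : Matrix (Fin (k - r)) (Fin r) ℝ)
    (G : Matrix (Fin r) (Fin r) ℝ)
    (hGdef : G = (Ztᵀ * Zt)⁻¹ * Ztᵀ * (Z + Zperp * X))
    (hG : IsUnit G)
    (Xt : Matrix (Fin (k - r)) (Fin r) ℝ)
    (hXtdef : Xt = (Ztperpᵀ * Ztperp)⁻¹ * Ztperpᵀ * (Z + Zperp * X) * G⁻¹) :
    Z + Zperp * X = (Zt + Ztperp * Xt) * G ∧
    LinearMap.range (Z + Zperp * X).mulVecLin
      = LinearMap.range (Zt + Ztperp * Xt).mulVecLin := by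
  set M : Matrix (Fin k) (Fin r) ℝ := Z + Zperp * X with hM
  -- Gram matrices are invertible
  have hU1 : IsUnit (Ztᵀ * Zt) :=
    aux_isUnit_of_rank _ (by rw [Matrix.rank_transpose_mul_self, hZt])
  have hU2 : IsUnit (Ztperpᵀ * Ztperp) :=
    aux_isUnit_of_rank _ (by rw [Matrix.rank_transpose_mul_self, hZtperp])
  have hGdet : IsUnit G.det := (Matrix.isUnit_iff_isUnit_det G).mp hG
  -- projections
  set P1 : Matrix (Fin k) (Fin k) ℝ := Zt * (Ztᵀ * Zt)⁻¹ * Ztᵀ with hP1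
  set P2 : Matrix (Fin k) (Fin k) ℝ := Ztperp * (Ztperpᵀ * Ztperp)⁻¹ * Ztperpᵀ with hP2
  -- ranges of Zt and Ztperp span everything
  have hfin1 : Module.finrank ℝ (LinearMap.range Zt.mulVecLin) = r := hZt
  have hfin2 : Module.finrank ℝ (LinearMap.range Ztperp.mulVecLin) = k - r := hZtperp
  have horth'' : Ztperpᵀ * Zt = 0 := by
    have := congrArg Matrix.transpose horth'
    simpa [Matrix.transpose_mul] using this
  have hd1 : IsUnit (Ztᵀ * Zt).det := (Matrix.isUnit_iff_isUnit_det _).mp hU1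
  have hd2 : IsUnit (Ztperpᵀ * Ztperp).det := (Matrix.isUnit_iff_isUnit_det _).mp hU2
  have hP1Zt : P1 * Zt = Zt := by
    rw [hP1, Matrix.mul_assoc (Zt * (Ztᵀ * Zt)⁻¹), Matrix.mul_assoc Zt,
      Matrix.nonsing_inv_mul _ hd1, Matrix.mul_one]
  have hP1Ztp : P1 * Ztperp = 0 := by
    rw [hP1, Matrix.mul_assoc (Zt * (Ztᵀ * Zt)⁻¹), horth', Matrix.mul_zero]
  have hP2Zt : P2 * Zt = 0 := by
    rw [hP2, Matrix.mul_assoc (Ztperp * (Ztperpᵀ * Ztperp)⁻¹), horth'', Matrix.mul_zero]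
  have hP2Ztp : P2 * Ztperp = Ztperp := by
    rw [hP2, Matrix.mul_assoc (Ztperp * (Ztperpᵀ * Ztperp)⁻¹), Matrix.mul_assoc Ztperp,
      Matrix.nonsing_inv_mul _ hd2, Matrix.mul_one]
  have hdisj : LinearMap.range Zt.mulVecLin ⊓ LinearMap.range Ztperp.mulVecLin = ⊥ := by
    rw [Submodule.eq_bot_iff]
    rintro v ⟨⟨a, rfl⟩, ⟨b, hb⟩⟩
    simp only [Matrix.mulVecLin_apply] at hb ⊢
    have h2 : (Ztᵀ * Zt) *ᵥ a = 0 := by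
      rw [← Matrix.mulVec_mulVec, ← hb, Matrix.mulVec_mulVec, horth', Matrix.zero_mulVec]
    have ha : a = 0 := by
      have := congrArg (fun w => (Ztᵀ * Zt)⁻¹ *ᵥ w) h2
      simpa [Matrix.mulVec_mulVec, Matrix.nonsing_inv_mul _ hd1] using this
    simp [ha]
  have htop : LinearMap.range Zt.mulVecLin ⊔ LinearMap.range Ztperp.mulVecLin = ⊤ := by
    apply Submodule.eq_top_of_finrank_eq
    have := Submodule.finrank_sup_add_finrank_inf_eq
      (LinearMap.range Zt.mulVecLin) (LinearMap.range Ztperp.mulVecLin)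
    rw [hdisj] at this
    simp only [finrank_bot, add_zero] at this
    rw [this, hfin1, hfin2, Module.finrank_fin_fun]
    omega
  -- P1 + P2 = 1
  have hproj : P1 + P2 = 1 := by
    have key : ∀ v : Fin k → ℝ, (P1 + P2) *ᵥ v = v := by
      intro v
      have hv : v ∈ LinearMap.range Zt.mulVecLin ⊔ LinearMap.range Ztperp.mulVecLin := by
        rw [htop]; trivial
      obtain ⟨x, ⟨a, rfl⟩, y, ⟨b, rfl⟩, rfl⟩ := Submodule.mem_sup.mp hv
      simp only [Matrix.mulVecLin_apply, Matrix.add_mulVec, Matrix.mulVec_add,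
        Matrix.mulVec_mulVec, Matrix.add_mul, hP1Zt, hP1Ztp, hP2Zt, hP2Ztp,
        Matrix.zero_mulVec, zero_add, add_zero]

    ext i j
    have := congrFun (key (Pi.single j 1)) i
    simpa [Matrix.mulVec_single, Matrix.one_apply, Pi.single_apply] using this
  -- main identity
  have hmain : M = (Zt + Ztperp * Xt) * G := by
    have hXtG : Xt * G = (Ztperpᵀ * Ztperp)⁻¹ * Ztperpᵀ * M := by
      rw [hXtdef, Matrix.mul_assoc _ G⁻¹ G, Matrix.nonsing_inv_mul _ hGdet, Matrix.mul_one]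
    have hZtG : Zt * G = P1 * M := by
      rw [hGdef, hP1]; simp only [Matrix.mul_assoc]
    calc M = (P1 + P2) * M := by rw [hproj, Matrix.one_mul]
    _ = P1 * M + P2 * M := by rw [Matrix.add_mul]
    _ = Zt * G + Ztperp * (Xt * G) := by
        rw [hZtG, hXtG, hP2]; simp only [Matrix.mul_assoc]
    _ = (Zt + Ztperp * Xt) * G := by rw [Matrix.add_mul, Matrix.mul_assoc]
  refine ⟨hmain, ?_⟩
  rw [hmain, Matrix.mulVecLin_mul]
  apply LinearMap.range_comp_of_range_eq_top
  rw [LinearMap.range_eq_top]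
  intro w
  exact ⟨G⁻¹ *ᵥ w, by simp [Matrix.mulVecLin_apply, Matrix.mulVec_mulVec, Matrix.mul_nonsing_inv _ hGdet]⟩
end

section
/- Let W be a real k×r matrix of rank r. Then det(ZᵀW) ≠ 0 if and only if there exists X ∈ ℝ^{(k−r)×r} such that the column space of W equals the column space of Z + Z_⊥X; that is, the chart neighbourhood 𝔘_Z = {col(Z + Z_⊥X) : X ∈ ℝ^{(k−r)×r}} of the Grassmannian consists exactly of the column spaces of full-rank matrices W with det(ZᵀW) ≠ 0. -/
open Matrix

/-- Factorization from range inclusion. -/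
lemma exists_factor {m n p : ℕ} (M : Matrix (Fin m) (Fin n) ℝ) (N : Matrix (Fin m) (Fin p) ℝ)
    (h : LinearMap.range N.mulVecLin ≤ LinearMap.range M.mulVecLin) :
    ∃ C : Matrix (Fin n) (Fin p) ℝ, N = M * C := by
  have hcol : ∀ j, ∃ c : Fin n → ℝ, M.mulVec c = N.mulVec (Pi.single j 1) := fun j =>
    h ⟨Pi.single j 1, rfl⟩
  choose c hc using hcol
  refine ⟨Matrix.of fun i j => c j i, ?_⟩
  ext i j
  have h1 := congrFun (hc j) i
  simp only [Matrix.mulVec, dotProduct, Pi.single_apply, mul_ite, mul_one, mul_zero,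
    Finset.sum_ite_eq', Finset.mem_univ, if_true] at h1
  rw [Matrix.mul_apply, ← h1]
  rfl

/-- Injectivity of `mulVecLin` from full column rank. -/
lemma inj_of_rank {m n : ℕ} (A : Matrix (Fin m) (Fin n) ℝ) (h : A.rank = n) :
    Function.Injective A.mulVecLin := by
  rw [← LinearMap.ker_eq_bot]
  have h1 := A.mulVecLin.finrank_range_add_finrank_ker
  have h2 : Module.finrank ℝ (Fin n → ℝ) = n := Module.finrank_fin_fun ℝ
  have h3 : Module.finrank ℝ (LinearMap.range A.mulVecLin) = n := h
  rw [h2, h3] at h1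
  have h4 : Module.finrank ℝ (LinearMap.ker A.mulVecLin) = 0 := by omega
  exact Submodule.finrank_eq_zero.mp h4

/-- A square matrix of full rank has nonzero determinant. -/
lemma det_ne_zero_of_rank {n : ℕ} (A : Matrix (Fin n) (Fin n) ℝ) (h : A.rank = n) :
    A.det ≠ 0 := by
  intro hd
  obtain ⟨v, hv, hv0⟩ := (Matrix.exists_mulVec_eq_zero_iff).mpr hd
  have hinj := inj_of_rank A h
  apply hv
  have : A.mulVecLin v = A.mulVecLin 0 := by
    simpa [Matrix.mulVecLin_apply] using hv0
  exact hinj this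

/-- for a full-rank `W`, `det (Zᵀ W) ≠ 0` iff the column space of `W` is the
column space of some `Z + Z_⊥ X`. -/
theorem stmt4 (k r : ℕ) (hr : 0 < r) (hrk : r < k)
    (Z : Matrix (Fin k) (Fin r) ℝ) (hZ : Z.rank = r)
    (Zperp : Matrix (Fin k) (Fin (k - r)) ℝ) (hZperp : Zperp.rank = k - r)
    (horth : Zᵀ * Zperp = 0)
    (W : Matrix (Fin k) (Fin r) ℝ) (hW : W.rank = r) :
    (Zᵀ * W).det ≠ 0 ↔
      ∃ X : Matrix (Fin (k - r)) (Fin r) ℝ,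
        LinearMap.range W.mulVecLin = LinearMap.range (Z + Zperp * X).mulVecLin := by
  -- G = ZᵀZ is invertible
  have hGrank : (Zᵀ * Z).rank = r := by rw [Matrix.rank_transpose_mul_self]; exact hZ
  have hGdet : (Zᵀ * Z).det ≠ 0 := det_ne_zero_of_rank _ hGrank
  haveI invG : Invertible (Zᵀ * Z) := (Zᵀ * Z).invertibleOfIsUnitDet (isUnit_iff_ne_zero.mpr hGdet)
  -- kernel of Zᵀ equals range of Zperp
  have hle : LinearMap.range Zperp.mulVecLin ≤ LinearMap.ker (Zᵀ).mulVecLin := by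
    rintro x ⟨y, rfl⟩
    simp only [LinearMap.mem_ker, Matrix.mulVecLin_apply, Matrix.mulVec_mulVec, horth,
      Matrix.zero_mulVec]
  have hkerq : LinearMap.range Zperp.mulVecLin = LinearMap.ker (Zᵀ).mulVecLin := by
    apply Submodule.eq_of_le_of_finrank_le hle
    have h1 := (Zᵀ).mulVecLin.finrank_range_add_finrank_ker
    have h2 : Module.finrank ℝ (Fin k → ℝ) = k := Module.finrank_fin_fun ℝ
    have h3 : Module.finrank ℝ (LinearMap.range (Zᵀ).mulVecLin) = r := by
      have : (Zᵀ).rank = r := by rw [Matrix.rank_transpose]; exact hZ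
      exact this
    have h4 : Module.finrank ℝ (LinearMap.range Zperp.mulVecLin) = k - r := hZperp
    rw [h2, h3] at h1
    omega
  constructor
  · intro hdet
    set A : Matrix (Fin r) (Fin r) ℝ := (Zᵀ * Z)⁻¹ * (Zᵀ * W) with hAdef
    have hAdet : A.det ≠ 0 := by
      rw [hAdef, Matrix.det_mul]
      have h5 := Matrix.det_nonsing_inv_mul_det (Zᵀ * Z) (isUnit_iff_ne_zero.mpr hGdet)
      exact mul_ne_zero (left_ne_zero_of_mul_eq_one h5) hdet
    haveI invA : Invertible A := A.invertibleOfIsUnitDet (isUnit_iff_ne_zero.mpr hAdet)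
    have hZA : Zᵀ * (W - Z * A) = 0 := by
      rw [Matrix.mul_sub, hAdef, ← Matrix.mul_assoc Zᵀ Z _,
        Matrix.mul_inv_cancel_left_of_invertible, sub_self]
    have hsub : LinearMap.range (W - Z * A).mulVecLin ≤ LinearMap.range Zperp.mulVecLin := by
      rw [hkerq]
      rintro x ⟨y, rfl⟩
      simp only [LinearMap.mem_ker, Matrix.mulVecLin_apply, Matrix.mulVec_mulVec, hZA,
        Matrix.zero_mulVec]
    obtain ⟨B, hB⟩ := exists_factor Zperp (W - Z * A) hsub
    refine ⟨B * A⁻¹, ?_⟩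
    have h5 : Zperp * (B * A⁻¹) * A = Zperp * B := by
      rw [Matrix.mul_assoc Zperp, Matrix.mul_assoc B, Matrix.nonsing_inv_mul A
        (isUnit_iff_ne_zero.mpr hAdet), Matrix.mul_one]
    have hWeq : W = (Z + Zperp * (B * A⁻¹)) * A := by
      rw [Matrix.add_mul, h5, ← hB]
      abel
    have hsurj : LinearMap.range A.mulVecLin = ⊤ := by
      rw [LinearMap.range_eq_top]
      intro y
      refine ⟨A⁻¹.mulVec y, ?_⟩
      simp [Matrix.mulVecLin_apply, Matrix.mulVec_mulVec, Matrix.mul_inv_of_invertible]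
    conv_lhs => rw [hWeq]
    rw [Matrix.mulVecLin_mul, LinearMap.range_comp_of_range_eq_top _ hsurj]
  · rintro ⟨X, hX⟩
    set M := Z + Zperp * X with hM
    have hZM : Zᵀ * M = Zᵀ * Z := by
      rw [hM, Matrix.mul_add, ← Matrix.mul_assoc, horth, Matrix.zero_mul, add_zero]
    obtain ⟨C, hC⟩ := exists_factor M W (le_of_eq hX)
    have hfact : Zᵀ * W = (Zᵀ * Z) * C := by
      rw [hC, ← Matrix.mul_assoc, hZM]
    have hWinj := inj_of_rank W hW
    have hCinj : Function.Injective C.mulVecLin := by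
      rw [hC, Matrix.mulVecLin_mul] at hWinj
      exact fun x y hxy => hWinj (by simp only [LinearMap.comp_apply, hxy])
    have hCdet : C.det ≠ 0 := by
      intro hd
      obtain ⟨v, hv, hv0⟩ := (Matrix.exists_mulVec_eq_zero_iff).mpr hd
      apply hv
      have : C.mulVecLin v = C.mulVecLin 0 := by
        simpa [Matrix.mulVecLin_apply] using hv0
      exact hCinj this
    rw [hfact, Matrix.det_mul]
    exact mul_ne_zero hGdet hCdet
end

section
/- For every X ∈ ℝ^{(k−r)×r}, the k×k matrix [exp(Z_⊥XZ⁺)·Z | Z_⊥] obtained by concatenating the columns of exp(Z_⊥XZ⁺)·Z and of Z_⊥ (viewed as a square k×k matrix via the equivalence Fin r ⊕ Fin (k−r) ≃ Fin k) is invertible. -/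
/-!
Put `M := Z_⊥ X Z⁺`. Since `Zᵀ Z_⊥ = 0` we have `M Z_⊥ = 0`, hence `M² = 0`, `exp M = 1 + M` and
`exp M · Z_⊥ = Z_⊥`. So `[exp M · Z | Z_⊥] = exp M · [Z | Z_⊥]`, and `[Z | Z_⊥]` is invertible
because its two blocks have independent columns spanning mutually orthogonal subspaces.
-/

open Matrix

theorem NormedSpace.exp_eq_one_add_of_mul_self_eq_zero {𝔸 : Type*} [Ring 𝔸] [Algebra ℚ 𝔸]
    [TopologicalSpace 𝔸] [IsTopologicalRing 𝔸] {a : 𝔸} (ha : a * a = 0) :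
    NormedSpace.exp a = 1 + a := by
  have hpow : ∀ n, 2 ≤ n → a ^ n = 0 := fun n hn ↦ by
    rw [← Nat.add_sub_cancel' hn, pow_add, sq, ha, zero_mul]
  rw [NormedSpace.exp_eq_tsum_rat]
  dsimp only
  rw [tsum_eq_sum (s := Finset.range 2)]
  · simp [Finset.sum_range_succ]
  · intro n hn
    rw [hpow n (by simp at hn; omega), smul_zero]

namespace Matrix

variable {m n n₁ n₂ K : Type*} [Fintype n] [Fintype n₁] [Fintype n₂]

theorem mulVec_injective_of_rank_eq_card [Field K] {A : Matrix m n K}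
    (h : A.rank = Fintype.card n) : Function.Injective A.mulVec := by
  rw [mulVec_injective_iff, linearIndependent_iff_card_eq_finrank_span, ← h,
    rank_eq_finrank_span_cols]
  rfl

theorem mulVec_injective_fromCols_of_transpose_mul_eq_zero [Fintype m] [CommRing K]
    [LinearOrder K] [IsStrictOrderedRing K] {A : Matrix m n₁ K} {B : Matrix m n₂ K}
    (hA : Function.Injective A.mulVec) (hB : Function.Injective B.mulVec) (hAB : Aᵀ * B = 0) :
    Function.Injective (fromCols A B).mulVec := by
  rw [← coe_mulVecLin, injective_iff_map_eq_zero]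
  intro u hu
  rw [← Sum.elim_comp_inl_inr u] at hu ⊢
  set v := u ∘ Sum.inl
  set w := u ∘ Sum.inr
  rw [coe_mulVecLin, fromCols_mulVec_sumElim] at hu
  have horth : A *ᵥ v ⬝ᵥ B *ᵥ w = 0 := by
    rw [← vecMul_transpose, ← dotProduct_mulVec, mulVec_mulVec, hAB, zero_mulVec,
      dotProduct_zero]
  have hAv : A *ᵥ v = 0 := by
    rw [← dotProduct_self_eq_zero]
    calc A *ᵥ v ⬝ᵥ A *ᵥ v = A *ᵥ v ⬝ᵥ (A *ᵥ v + B *ᵥ w) := by rw [dotProduct_add, horth, add_zero]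
      _ = 0 := by rw [hu, dotProduct_zero]
  have hv : v = 0 := hA (by rw [hAv, mulVec_zero])
  have hw : w = 0 := hB (by rw [mulVec_zero, ← hu, hAv, zero_add])
  rw [hv, hw, Sum.elim_zero_zero]

theorem isUnit_submatrix_fromCols_of_transpose_mul_eq_zero [Fintype m] [DecidableEq m] [Field K]
    [LinearOrder K] [IsStrictOrderedRing K] {A : Matrix m n₁ K} {B : Matrix m n₂ K}
    (hA : Function.Injective A.mulVec) (hB : Function.Injective B.mulVec) (hAB : Aᵀ * B = 0)
    (e : m ≃ n₁ ⊕ n₂) : IsUnit ((fromCols A B).submatrix id e) := by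
  rw [← mulVec_injective_iff_isUnit]
  intro x y hxy
  simp only [submatrix_mulVec_equiv, Function.comp_id] at hxy
  exact e.symm.surjective.injective_comp_right
    (mulVec_injective_fromCols_of_transpose_mul_eq_zero hA hB hAB hxy)

end Matrix

theorem stmt9_general (k r : ℕ) (hrk : r < k)
    (Z : Matrix (Fin k) (Fin r) ℝ) (hZ : Z.rank = r)
    (Zperp : Matrix (Fin k) (Fin (k - r)) ℝ) (hZperp : Zperp.rank = k - r)
    (horth : Zᵀ * Zperp = 0)
    (X : Matrix (Fin (k - r)) (Fin r) ℝ) :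
    IsUnit ((Matrix.fromCols
        (NormedSpace.exp (Zperp * X * ((Zᵀ * Z)⁻¹ * Zᵀ)) * Z) Zperp).submatrix id
      ((finSumFinEquiv.trans (finCongr (Nat.add_sub_cancel' hrk.le))).symm)) := by
  set M := Zperp * X * ((Zᵀ * Z)⁻¹ * Zᵀ)
  have hMZperp : M * Zperp = 0 := by simp only [M, Matrix.mul_assoc, horth, Matrix.mul_zero]
  have hMM : M * M = 0 := by
    calc M * M = M * Zperp * (X * ((Zᵀ * Z)⁻¹ * Zᵀ)) := by simp only [M, Matrix.mul_assoc]
      _ = 0 := by rw [hMZperp, Matrix.zero_mul]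
  have hexp : NormedSpace.exp M * Zperp = Zperp := by
    rw [NormedSpace.exp_eq_one_add_of_mul_self_eq_zero hMM, Matrix.add_mul, Matrix.one_mul,
      hMZperp, add_zero]
  -- `(exp M * C).submatrix id e` is `exp M * C.submatrix id e` by definition
  rw [← hexp, ← mul_fromCols]
  exact (isUnit_exp M).mul <| isUnit_submatrix_fromCols_of_transpose_mul_eq_zero
    (mulVec_injective_of_rank_eq_card (by simpa using hZ))
    (mulVec_injective_of_rank_eq_card (by simpa using hZperp)) horth _

/-- the concatenated matrix `[exp(Z_⊥ X Z⁺) Z | Z_⊥]`, viewed as a `k × k`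
matrix, is invertible. -/
theorem stmt9 (k r : ℕ) (hr : 0 < r) (hrk : r < k)
    (Z : Matrix (Fin k) (Fin r) ℝ) (hZ : Z.rank = r)
    (Zperp : Matrix (Fin k) (Fin (k - r)) ℝ) (hZperp : Zperp.rank = k - r)
    (horth : Zᵀ * Zperp = 0)
    (X : Matrix (Fin (k - r)) (Fin r) ℝ) :
    IsUnit ((Matrix.fromCols
        (NormedSpace.exp (Zperp * X * ((Zᵀ * Z)⁻¹ * Zᵀ)) * Z) Zperp).submatrix id
      ((finSumFinEquiv.trans (finCongr (Nat.add_sub_cancel' hrk.le))).symm)) :=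
  stmt9_general k r hrk Z hZ Zperp hZperp horth X
end

section
/- The map X ↦ exp(Z_⊥ X Z⁺) from ℝ^{(k−r)×r} to the invertible k×k matrices is an injective group homomorphism from the additive group ℝ^{(k−r)×r} to GL_k(ℝ): for all X, Y ∈ ℝ^{(k−r)×r} one has exp(Z_⊥XZ⁺)·exp(Z_⊥YZ⁺) = exp(Z_⊥(X+Y)Z⁺), each exp(Z_⊥XZ⁺) is invertible with inverse exp(−Z_⊥XZ⁺), and exp(Z_⊥XZ⁺) = exp(Z_⊥YZ⁺) implies X = Y. In particular the set 𝒢_Z := {exp(Z_⊥XZ⁺) : X ∈ ℝ^{(k−r)×r}} is a commutative subgroup of GL_k(ℝ) and exp : 𝔤_Z → 𝒢_Z is bijective, where 𝔤_Z := {Z_⊥XZ⁺ : X ∈ ℝ^{(k−r)×r}}. -/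
/-!
With `Z⁺ = (ZᵀZ)⁻¹Zᵀ`, the relation `Z⁺ Z_⊥ = 0` kills every product
`(Z_⊥ X Z⁺) (Z_⊥ Y Z⁺)`, so the exponential series of `Z_⊥ X Z⁺` stops after its linear term:
`exp (Z_⊥ X Z⁺) = 1 + Z_⊥ X Z⁺`. Multiplicativity follows by expanding, and the inverse formula
is its case `Y = -X`.
For injectivity, full column rank makes `(AᵀA)⁻¹Aᵀ` a left inverse of `A`, so `Z_⊥` can be
cancelled on the left and `Z⁺` (with right inverse `Z`) on the right.
-/

open Matrix

namespace Matrix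

section PseudoInverse

variable {K m n : Type*} [Fintype m] [Fintype n] [DecidableEq n]

theorem isUnit_of_rank_eq_card [Field K] {A : Matrix n n K} (h : A.rank = Fintype.card n) :
    IsUnit A := by
  rw [← mulVec_surjective_iff_isUnit, ← coe_mulVecLin, ← LinearMap.range_eq_top]
  apply Submodule.eq_top_of_finrank_eq
  rw [← rank, h, Module.finrank_fintype_fun_eq_card]

theorem pinv_mul_self_of_rank_eq_card [Field K] [LinearOrder K] [IsStrictOrderedRing K]
    {A : Matrix m n K} (h : A.rank = Fintype.card n) : (Aᵀ * A)⁻¹ * Aᵀ * A = 1 := by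
  rw [Matrix.mul_assoc, nonsing_inv_mul]
  exact (isUnit_iff_isUnit_det _).mp (isUnit_of_rank_eq_card (by rw [rank_transpose_mul_self, h]))

end PseudoInverse

section Sandwich

variable {R k m n : Type*} [Fintype k] [Fintype m] [Fintype n] [Ring R]
  {P : Matrix k m R} {Q : Matrix n k R}

theorem sandwich_mul_sandwich_eq_zero (hQP : Q * P = 0) (X Y : Matrix m n R) :
    (P * X * Q) * (P * Y * Q) = 0 := by
  simp only [Matrix.mul_assoc]
  rw [← Matrix.mul_assoc Q, hQP, Matrix.zero_mul, Matrix.mul_zero, Matrix.mul_zero]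

theorem sandwich_injective [DecidableEq m] [DecidableEq n] {L : Matrix m k R} (hL : L * P = 1)
    {M : Matrix k n R} (hM : Q * M = 1) :
    Function.Injective fun X : Matrix m n R => P * X * Q := by
  intro X Y hXY
  have hcancel : ∀ X : Matrix m n R, L * (P * X * Q) * M = X := fun X => by
    simp only [← Matrix.mul_assoc]
    rw [hL, Matrix.one_mul, Matrix.mul_assoc, hM, Matrix.mul_one]
  rw [← hcancel X, ← hcancel Y]
  exact congrArg (fun N => L * N * M) hXY

variable [DecidableEq k] [Algebra ℚ R] [TopologicalSpace R] [IsTopologicalRing R]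

theorem exp_sandwich (hQP : Q * P = 0) (X : Matrix m n R) :
    NormedSpace.exp (P * X * Q) = 1 + P * X * Q :=
  NormedSpace.exp_eq_one_add_of_mul_self_eq_zero (sandwich_mul_sandwich_eq_zero hQP X X)

theorem exp_sandwich_add (hQP : Q * P = 0) (X Y : Matrix m n R) :
    NormedSpace.exp (P * (X + Y) * Q) =
      NormedSpace.exp (P * X * Q) * NormedSpace.exp (P * Y * Q) := by
  rw [exp_sandwich hQP, exp_sandwich hQP, exp_sandwich hQP, add_mul, mul_add, mul_add,
    sandwich_mul_sandwich_eq_zero hQP, Matrix.mul_add, Matrix.add_mul]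
  noncomm_ring

theorem exp_sandwich_mul_exp_neg (hQP : Q * P = 0) (X : Matrix m n R) :
    NormedSpace.exp (P * X * Q) * NormedSpace.exp (-(P * X * Q)) = 1 := by
  rw [← Matrix.neg_mul, ← Matrix.mul_neg, ← exp_sandwich_add hQP, add_neg_cancel,
    Matrix.mul_zero, Matrix.zero_mul, NormedSpace.exp_zero]

theorem exp_neg_mul_exp_sandwich (hQP : Q * P = 0) (X : Matrix m n R) :
    NormedSpace.exp (-(P * X * Q)) * NormedSpace.exp (P * X * Q) = 1 := by
  rw [← Matrix.neg_mul, ← Matrix.mul_neg, ← exp_sandwich_add hQP, neg_add_cancel,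
    Matrix.mul_zero, Matrix.zero_mul, NormedSpace.exp_zero]

theorem exp_sandwich_injective [DecidableEq m] [DecidableEq n] (hQP : Q * P = 0)
    {L : Matrix m k R} (hL : L * P = 1) {M : Matrix k n R} (hM : Q * M = 1) :
    Function.Injective fun X : Matrix m n R => NormedSpace.exp (P * X * Q) := by
  intro X Y hXY
  refine sandwich_injective hL hM (add_left_cancel (a := 1) ?_)
  simpa only [exp_sandwich hQP] using hXY

end Sandwich

end Matrix

theorem stmt10_general (k r : ℕ)
    (Z : Matrix (Fin k) (Fin r) ℝ) (hZ : Z.rank = r)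
    (Zperp : Matrix (Fin k) (Fin (k - r)) ℝ) (hZperp : Zperp.rank = k - r)
    (horth : Zᵀ * Zperp = 0) :
    (∀ X Y : Matrix (Fin (k - r)) (Fin r) ℝ,
      NormedSpace.exp (Zperp * X * ((Zᵀ * Z)⁻¹ * Zᵀ)) *
          NormedSpace.exp (Zperp * Y * ((Zᵀ * Z)⁻¹ * Zᵀ))
        = NormedSpace.exp (Zperp * (X + Y) * ((Zᵀ * Z)⁻¹ * Zᵀ))) ∧
    (∀ X : Matrix (Fin (k - r)) (Fin r) ℝ,
      NormedSpace.exp (Zperp * X * ((Zᵀ * Z)⁻¹ * Zᵀ)) *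
          NormedSpace.exp (-(Zperp * X * ((Zᵀ * Z)⁻¹ * Zᵀ))) = 1 ∧
      NormedSpace.exp (-(Zperp * X * ((Zᵀ * Z)⁻¹ * Zᵀ))) *
          NormedSpace.exp (Zperp * X * ((Zᵀ * Z)⁻¹ * Zᵀ)) = 1) ∧
    (∀ X Y : Matrix (Fin (k - r)) (Fin r) ℝ,
      NormedSpace.exp (Zperp * X * ((Zᵀ * Z)⁻¹ * Zᵀ))
        = NormedSpace.exp (Zperp * Y * ((Zᵀ * Z)⁻¹ * Zᵀ)) → X = Y) := by
  have hQP : (Zᵀ * Z)⁻¹ * Zᵀ * Zperp = 0 := by rw [Matrix.mul_assoc, horth, Matrix.mul_zero]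
  have hZ_pinv : (Zᵀ * Z)⁻¹ * Zᵀ * Z = 1 :=
    pinv_mul_self_of_rank_eq_card (by rwa [Fintype.card_fin])
  have hZperp_pinv : (Zperpᵀ * Zperp)⁻¹ * Zperpᵀ * Zperp = 1 :=
    pinv_mul_self_of_rank_eq_card (by rwa [Fintype.card_fin])
  exact ⟨fun X Y => (exp_sandwich_add hQP X Y).symm,
    fun X => ⟨exp_sandwich_mul_exp_neg hQP X, exp_neg_mul_exp_sandwich hQP X⟩,
    fun X Y h => exp_sandwich_injective hQP hZperp_pinv hZ_pinv h⟩

/-- `X ↦ exp (Z_⊥ X Z⁺)` is an injective group homomorphism from the additive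
group `ℝ^{(k-r)×r}` into the invertible `k × k` matrices. -/
theorem stmt10 (k r : ℕ) (hr : 0 < r) (hrk : r < k)
    (Z : Matrix (Fin k) (Fin r) ℝ) (hZ : Z.rank = r)
    (Zperp : Matrix (Fin k) (Fin (k - r)) ℝ) (hZperp : Zperp.rank = k - r)
    (horth : Zᵀ * Zperp = 0) :
    (∀ X Y : Matrix (Fin (k - r)) (Fin r) ℝ,
      NormedSpace.exp (Zperp * X * ((Zᵀ * Z)⁻¹ * Zᵀ)) *
          NormedSpace.exp (Zperp * Y * ((Zᵀ * Z)⁻¹ * Zᵀ))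
        = NormedSpace.exp (Zperp * (X + Y) * ((Zᵀ * Z)⁻¹ * Zᵀ))) ∧
    (∀ X : Matrix (Fin (k - r)) (Fin r) ℝ,
      NormedSpace.exp (Zperp * X * ((Zᵀ * Z)⁻¹ * Zᵀ)) *
          NormedSpace.exp (-(Zperp * X * ((Zᵀ * Z)⁻¹ * Zᵀ))) = 1 ∧
      NormedSpace.exp (-(Zperp * X * ((Zᵀ * Z)⁻¹ * Zᵀ))) *
          NormedSpace.exp (Zperp * X * ((Zᵀ * Z)⁻¹ * Zᵀ)) = 1) ∧
    (∀ X Y : Matrix (Fin (k - r)) (Fin r) ℝ,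
      NormedSpace.exp (Zperp * X * ((Zᵀ * Z)⁻¹ * Zᵀ))
        = NormedSpace.exp (Zperp * Y * ((Zᵀ * Z)⁻¹ * Zᵀ)) → X = Y) :=
  stmt10_general k r Z hZ Zperp hZperp horth
end

section
/- For every X ∈ ℝ^{(k−r)×r} and every invertible G ∈ ℝ^{r×r}, the linear map from ℝ^{(k−r)×r} × ℝ^{r×r} to ℝ^{k×r} given by (Ẋ, Ġ) ↦ Z_⊥·Ẋ·G + (Z + Z_⊥X)·Ġ is a linear isomorphism. -/
open Matrix

lemma aux_inj {m n : Type*} [Fintype m] [Fintype n] (A : Matrix m n ℝ)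
    (h : A.rank = Fintype.card n) : Function.Injective A.mulVecLin := by
  rw [← LinearMap.ker_eq_bot]
  have h1 := A.mulVecLin.finrank_range_add_finrank_ker
  rw [Module.finrank_pi] at h1
  have h2 : Module.finrank ℝ (LinearMap.ker A.mulVecLin) = 0 := by
    have : Module.finrank ℝ (LinearMap.range A.mulVecLin) = Fintype.card n := h
    omega
  exact Submodule.finrank_eq_zero.mp h2

lemma aux_cancel {m n o : Type*} [Fintype m] [Fintype n] [Fintype o] (A : Matrix m n ℝ)
    (h : A.rank = Fintype.card n) (M : Matrix n o ℝ) (hM : A * M = 0) : M = 0 := by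
  have hinj := aux_inj A h
  ext i j
  have : A.mulVecLin (fun i => M i j) = 0 := by
    funext l
    have := congrFun (congrFun hM l) j
    simpa [mulVecLin_apply, mulVec, dotProduct, Matrix.mul_apply] using this
  have := hinj (by simpa using this : A.mulVecLin (fun i => M i j) = A.mulVecLin 0)
  exact congrFun this i

/-- for any `X` and invertible `G`, the linear map
`(Ẋ, Ġ) ↦ Z_⊥ Ẋ G + (Z + Z_⊥ X) Ġ` is a linear isomorphism. -/
theorem stmt13 (k r : ℕ) (hr : 0 < r) (hrk : r < k)
    (Z : Matrix (Fin k) (Fin r) ℝ) (hZ : Z.rank = r)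
    (Zperp : Matrix (Fin k) (Fin (k - r)) ℝ) (hZperp : Zperp.rank = k - r)
    (horth : Zᵀ * Zperp = 0)
    (X : Matrix (Fin (k - r)) (Fin r) ℝ)
    (G : Matrix (Fin r) (Fin r) ℝ) (hG : IsUnit G) :
    IsLinearMap ℝ (fun p : Matrix (Fin (k - r)) (Fin r) ℝ × Matrix (Fin r) (Fin r) ℝ =>
      Zperp * p.1 * G + (Z + Zperp * X) * p.2) ∧
    Function.Bijective (fun p : Matrix (Fin (k - r)) (Fin r) ℝ × Matrix (Fin r) (Fin r) ℝ =>
      Zperp * p.1 * G + (Z + Zperp * X) * p.2) := by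
  have hlin : IsLinearMap ℝ (fun p : Matrix (Fin (k - r)) (Fin r) ℝ × Matrix (Fin r) (Fin r) ℝ =>
      Zperp * p.1 * G + (Z + Zperp * X) * p.2) := by
    constructor
    · intro p q
      simp [Matrix.mul_add, Matrix.add_mul]
      abel
    · intro c p
      simp [Matrix.mul_smul, Matrix.smul_mul, smul_add]
  refine ⟨hlin, ?_⟩
  set f : Matrix (Fin (k - r)) (Fin r) ℝ × Matrix (Fin r) (Fin r) ℝ →ₗ[ℝ]
      Matrix (Fin k) (Fin r) ℝ := hlin.mk' _
  -- injectivity of ZᵀZ and ZperpᵀZperp based cancellation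
  have hZTZ : (Zᵀ * Z).rank = Fintype.card (Fin r) := by
    rw [Matrix.rank_transpose_mul_self, hZ, Fintype.card_fin]
  have hZp : Zperp.rank = Fintype.card (Fin (k - r)) := by
    rw [hZperp, Fintype.card_fin]
  have hinj : Function.Injective f := by
    rw [← LinearMap.ker_eq_bot, LinearMap.ker_eq_bot']
    intro p hp
    have hp0 : Zperp * p.1 * G + (Z + Zperp * X) * p.2 = 0 := hp
    -- multiply on left by Zᵀ
    have hZZp : ∀ {o : Type} (M : Matrix (Fin (k - r)) o ℝ), Zᵀ * (Zperp * M) = 0 := by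
      intro o M; rw [← Matrix.mul_assoc, horth, Matrix.zero_mul]
    have h1 : Zᵀ * Z * p.2 = 0 := by
      have := congrArg (fun M => Zᵀ * M) hp0
      simpa [Matrix.mul_add, Matrix.add_mul, Matrix.mul_assoc, hZZp] using this
    have hp2 : p.2 = 0 := aux_cancel (Zᵀ * Z) hZTZ p.2 h1
    have h2 : Zperp * p.1 * G = 0 := by
      rw [hp2] at hp0; simpa using hp0
    obtain ⟨u, hu⟩ := hG
    have h3 : Zperp * p.1 = 0 := by
      have := congrArg (fun M => M * (↑u⁻¹ : Matrix (Fin r) (Fin r) ℝ)) h2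
      simp only [Matrix.zero_mul, Matrix.mul_assoc] at this
      rwa [← hu, Units.mul_inv, Matrix.mul_one] at this
    have hp1 : p.1 = 0 := aux_cancel Zperp hZp p.1 h3
    exact Prod.ext hp1 hp2
  have hdim : Module.finrank ℝ (Matrix (Fin (k - r)) (Fin r) ℝ × Matrix (Fin r) (Fin r) ℝ)
      = Module.finrank ℝ (Matrix (Fin k) (Fin r) ℝ) := by
    simp [Module.finrank_prod, Module.finrank_matrix]
    have : k - r + r = k := by omega
    nlinarith [this]
  have hbij := LinearMap.linearEquivOfInjective f hinj hdim
  exact ⟨hinj, (LinearMap.injective_iff_surjective_of_finrank_eq_finrank hdim).mp hinj⟩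
end

section
/- Let A be a real n×m matrix. Then A has rank r and det(UᵀAV) ≠ 0 if and only if there exist X ∈ ℝ^{(n−r)×r}, Y ∈ ℝ^{(m−r)×r} and an invertible H ∈ ℝ^{r×r} such that A = (U + U_⊥X)·H·(V + V_⊥Y)ᵀ. Moreover, in that case the triple (X, Y, H) is unique and is given explicitly by H = U⁺A(V⁺)ᵀ, X = U_⊥⁺A(V⁺)ᵀ·H⁻¹, and Y = V_⊥⁺Aᵀ(U⁺)ᵀ·(Hᵀ)⁻¹; that is, the chart θ_Z : 𝒰_Z → ℝ^{(n−r)×r} × ℝ^{(m−r)×r} × GL_r is a bijection, where 𝒰_Z := {A ∈ ℝ^{n×m} : rank A = r and det(UᵀAV) ≠ 0}. -/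
open Matrix

/-! If `A = (U + U⊥ X) H (V + V⊥ Y)ᵀ`, then `Uᵀ A V = (Uᵀ U) H (Vᵀ V)`, and since
`Uᵀ U⊥ = 0` and `Vᵀ V⊥ = 0` the pseudo-inverses of `U`, `U⊥`, `V`, `V⊥` read off `H`, `X H`
and `Y Hᵀ`. Conversely, if `rank A = r` and `M = Uᵀ A V` is invertible, then
`rank (Uᵀ A) = rank A`, so `Uᵀ` is injective on the column space of `A`, which gives the
factorization `A = (A V M⁻¹) (Uᵀ A)`. As `U U⁺ + U⊥ U⊥⁺ = 1`, any `P` with `Uᵀ P = Uᵀ U` is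
`U + U⊥ (U⊥⁺ P)`; this puts the left factor, rescaled by `Uᵀ U`, in the form `U + U⊥ X`, and
likewise the right one. -/

namespace Matrix

variable {K : Type*} [Field K] {ι κ μ ν ρ σ τ : Type*}

theorem isUnit_of_rank_eq_card_s15 [Fintype ρ] [DecidableEq ρ] {M : Matrix ρ ρ K}
    (h : M.rank = Fintype.card ρ) : IsUnit M := by
  rw [← mulVec_surjective_iff_isUnit]
  have hrange : LinearMap.range M.mulVecLin = ⊤ :=
    Submodule.eq_top_of_finrank_eq (by rw [← rank, h, Module.finrank_fintype_fun_eq_card])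
  exact LinearMap.range_eq_top.mp hrange

theorem isUnit_det_transpose_mul_self_of_rank_eq {R : Type*} [Field R] [LinearOrder R]
    [IsStrictOrderedRing R] [Fintype ι] [Fintype ρ] [DecidableEq ρ] {U : Matrix ι ρ R}
    (h : U.rank = Fintype.card ρ) : IsUnit (Uᵀ * U).det :=
  (isUnit_iff_isUnit_det _).mp <| isUnit_of_rank_eq_card_s15 <| by rw [rank_transpose_mul_self, h]

theorem ker_mulVecLin_mul_eq_of_rank_eq [Fintype ι] [Fintype κ] {B : Matrix μ ι K}
    {A : Matrix ι κ K} (h : (B * A).rank = A.rank) :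
    LinearMap.ker (B * A).mulVecLin = LinearMap.ker A.mulVecLin := by
  refine (Submodule.eq_of_le_of_finrank_eq ?_ ?_).symm
  · rw [mulVecLin_mul]
    exact LinearMap.ker_le_ker_comp _ _
  · have hA := LinearMap.finrank_range_add_finrank_ker A.mulVecLin
    have hBA := LinearMap.finrank_range_add_finrank_ker (B * A).mulVecLin
    rw [← rank] at hA hBA
    omega

theorem mul_eq_zero_of_mul_mul_eq_zero [Fintype ι] [Fintype κ] [Fintype ν] {B : Matrix μ ι K}
    {A : Matrix ι κ K} {D : Matrix κ ν K} (h : (B * A).rank = A.rank) (hD : B * A * D = 0) :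
    A * D = 0 := by
  refine mulVec_injective (funext fun v => ?_)
  have hv : D *ᵥ v ∈ LinearMap.ker (B * A).mulVecLin := by
    rw [LinearMap.mem_ker, mulVecLin_apply, mulVec_mulVec, hD, zero_mulVec]
  rw [ker_mulVecLin_mul_eq_of_rank_eq h] at hv
  simpa [mulVec_mulVec] using hv

theorem eq_mul_mul_inv_mul_of_rank_eq [Fintype ι] [Fintype κ] [Fintype ρ] [DecidableEq ρ]
    {A : Matrix ι κ K} {B : Matrix ρ ι K} {C : Matrix κ ρ K} (hA : A.rank = Fintype.card ρ)
    (hM : IsUnit (B * A * C).det) :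
    A = A * C * (B * A * C)⁻¹ * (B * A) := by
  classical
  have hBA : (B * A).rank = A.rank := by
    refine le_antisymm (rank_mul_le_right _ _) ?_
    calc A.rank = (B * A * C).rank := by
          rw [hA, rank_of_isUnit _ ((isUnit_iff_isUnit_det _).mpr hM)]
      _ ≤ (B * A).rank := rank_mul_le_left _ _
  have hD : B * A * (1 - C * (B * A * C)⁻¹ * (B * A)) = 0 := by
    rw [Matrix.mul_sub, Matrix.mul_one, ← Matrix.mul_assoc, ← Matrix.mul_assoc,
      ← Matrix.mul_assoc, mul_nonsing_inv _ hM, Matrix.one_mul, sub_self]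
  have hAD := mul_eq_zero_of_mul_mul_eq_zero hBA hD
  rw [Matrix.mul_sub, Matrix.mul_one, sub_eq_zero] at hAD
  simpa only [Matrix.mul_assoc] using hAD

theorem transpose_mul_eq_zero_comm [Fintype ι] {U : Matrix ι ρ K} {W : Matrix ι σ K} :
    Uᵀ * W = 0 ↔ Wᵀ * U = 0 := by
  rw [← transpose_transpose (Uᵀ * W), transpose_mul, transpose_transpose, transpose_eq_zero]

theorem transpose_mul_add_mul [Fintype ι] [Fintype σ] {U : Matrix ι ρ K} {W : Matrix ι σ K}
    (hUW : Uᵀ * W = 0) (X : Matrix σ ρ K) : Uᵀ * (U + W * X) = Uᵀ * U := by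
  rw [Matrix.mul_add, ← Matrix.mul_assoc, hUW, Matrix.zero_mul, add_zero]

/-- `(Uᵀ U)⁻¹ Uᵀ` is the Moore–Penrose pseudo-inverse of `U` only when `U` has full column rank;
otherwise `⁻¹` returns the junk value `0`. -/
noncomputable def pinv [Fintype ι] [Fintype ρ] [DecidableEq ρ] (U : Matrix ι ρ K) : Matrix ρ ι K :=
  (Uᵀ * U)⁻¹ * Uᵀ

section pinv

variable [Fintype ι] [Fintype ρ] [DecidableEq ρ]

theorem pinv_mul_self {U : Matrix ι ρ K} (hU : IsUnit (Uᵀ * U).det) : pinv U * U = 1 := by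
  rw [pinv, Matrix.mul_assoc, nonsing_inv_mul _ hU]

theorem pinv_mul_eq_zero {U : Matrix ι ρ K} {W : Matrix ι σ K} (hUW : Uᵀ * W = 0) :
    pinv U * W = 0 := by
  rw [pinv, Matrix.mul_assoc, hUW, Matrix.mul_zero]

theorem pinv_mul_add_mul [Fintype σ] {U : Matrix ι ρ K} {W : Matrix ι σ K}
    (hU : IsUnit (Uᵀ * U).det) (hUW : Uᵀ * W = 0) (X : Matrix σ ρ K) :
    pinv U * (U + W * X) = 1 := by
  rw [Matrix.mul_add, pinv_mul_self hU, ← Matrix.mul_assoc, pinv_mul_eq_zero hUW,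
    Matrix.zero_mul, add_zero]

theorem pinv_mul_add_mul_right {U : Matrix ι σ K} {W : Matrix ι ρ K}
    (hW : IsUnit (Wᵀ * W).det) (hUW : Uᵀ * W = 0) (X : Matrix ρ σ K) :
    pinv W * (U + W * X) = X := by
  rw [Matrix.mul_add, pinv_mul_eq_zero (transpose_mul_eq_zero_comm.mp hUW), zero_add,
    ← Matrix.mul_assoc, pinv_mul_self hW, Matrix.one_mul]

/-- `[U W]` is square and `[pinv U; pinv W]` is a left inverse of it, hence also a right inverse. -/
theorem mul_pinv_add_mul_pinv_eq_one [Fintype σ] [DecidableEq σ] [DecidableEq ι]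
    {U : Matrix ι ρ K} {W : Matrix ι σ K}
    (hcard : Fintype.card ρ + Fintype.card σ = Fintype.card ι)
    (hU : IsUnit (Uᵀ * U).det) (hW : IsUnit (Wᵀ * W).det) (hUW : Uᵀ * W = 0) :
    U * pinv U + W * pinv W = 1 := by
  have hleft : fromRows (pinv U) (pinv W) * fromCols U W = 1 := by
    rw [fromRows_mul_fromCols, pinv_mul_self hU, pinv_mul_self hW, pinv_mul_eq_zero hUW,
      pinv_mul_eq_zero (transpose_mul_eq_zero_comm.mp hUW), fromBlocks_one]
  have e : ι ≃ ρ ⊕ σ := Fintype.equivOfCardEq (by rw [Fintype.card_sum, hcard])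
  rw [← fromCols_mul_fromRows, (fromCols_mul_fromRows_eq_one_comm e _ _ _ _).mpr hleft]

theorem eq_add_mul_pinv_mul_of_transpose_mul_eq [Fintype σ] [DecidableEq σ] [DecidableEq ι]
    {U : Matrix ι ρ K} {W : Matrix ι σ K} (hproj : U * pinv U + W * pinv W = 1)
    (hU : IsUnit (Uᵀ * U).det) {P : Matrix ι ρ K} (hP : Uᵀ * P = Uᵀ * U) :
    P = U + W * (pinv W * P) := by
  have hUP : pinv U * P = 1 := by
    rw [pinv, Matrix.mul_assoc, hP, ← Matrix.mul_assoc]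
    exact pinv_mul_self hU
  calc P = (U * pinv U + W * pinv W) * P := by rw [hproj, Matrix.one_mul]
    _ = U + W * (pinv W * P) := by
      rw [Matrix.add_mul, Matrix.mul_assoc, hUP, Matrix.mul_one, Matrix.mul_assoc]

end pinv

section chart

variable [Fintype ι] [Fintype κ] [Fintype ρ] [Fintype σ] [Fintype τ] [DecidableEq ρ]
  {U : Matrix ι ρ K} {Uperp : Matrix ι σ K} {V : Matrix κ ρ K}
  {Vperp : Matrix κ τ K} {A : Matrix ι κ K}

theorem rank_eq_and_isUnit_det_of_eq_chart {X : Matrix σ ρ K} {Y : Matrix τ ρ K}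
    {H : Matrix ρ ρ K} (hU : IsUnit (Uᵀ * U).det) (hV : IsUnit (Vᵀ * V).det)
    (horthU : Uᵀ * Uperp = 0) (horthV : Vᵀ * Vperp = 0) (hH : IsUnit H)
    (hA : A = (U + Uperp * X) * H * (V + Vperp * Y)ᵀ) :
    A.rank = Fintype.card ρ ∧ IsUnit (Uᵀ * A * V).det := by
  have hM : Uᵀ * A * V = Uᵀ * U * H * (Vᵀ * V) := by
    calc Uᵀ * A * V = Uᵀ * (U + Uperp * X) * H * (Vᵀ * (V + Vperp * Y))ᵀ := by
          rw [hA]; simp only [transpose_mul, transpose_transpose, Matrix.mul_assoc]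
      _ = Uᵀ * U * H * (Vᵀ * V) := by
          rw [transpose_mul_add_mul horthU, transpose_mul_add_mul horthV, transpose_mul,
            transpose_transpose]
  have hMdet : IsUnit (Uᵀ * A * V).det := by
    rw [hM, det_mul, det_mul]
    exact ((hU.mul ((isUnit_iff_isUnit_det H).mp hH))).mul hV
  refine ⟨le_antisymm ?_ ?_, hMdet⟩
  · calc A.rank ≤ ((U + Uperp * X) * H).rank := hA ▸ rank_mul_le_left _ _
      _ ≤ (U + Uperp * X).rank := rank_mul_le_left _ _
      _ ≤ Fintype.card ρ := rank_le_card_width _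
  · calc Fintype.card ρ = (Uᵀ * A * V).rank :=
          (rank_of_isUnit _ ((isUnit_iff_isUnit_det _).mpr hMdet)).symm
      _ ≤ (Uᵀ * A).rank := rank_mul_le_left _ _
      _ ≤ A.rank := rank_mul_le_right _ _

theorem exists_eq_chart_of_rank_eq [DecidableEq ι] [DecidableEq κ] [DecidableEq σ]
    [DecidableEq τ] (hprojU : U * pinv U + Uperp * pinv Uperp = 1)
    (hprojV : V * pinv V + Vperp * pinv Vperp = 1) (hU : IsUnit (Uᵀ * U).det)
    (hV : IsUnit (Vᵀ * V).det) (hA : A.rank = Fintype.card ρ) (hM : IsUnit (Uᵀ * A * V).det) :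
    ∃ (X : Matrix σ ρ K) (Y : Matrix τ ρ K) (H : Matrix ρ ρ K),
      IsUnit H ∧ A = (U + Uperp * X) * H * (V + Vperp * Y)ᵀ := by
  have key := eq_mul_mul_inv_mul_of_rank_eq hA hM
  set M := Uᵀ * A * V with hMdef
  set G := Uᵀ * U
  set W := Vᵀ * V with hWdef
  set P := A * V * M⁻¹ * G
  set Q := (W * M⁻¹ * (Uᵀ * A))ᵀ
  set H := G⁻¹ * M * W⁻¹
  have hP : Uᵀ * P = G := by
    simp only [P, ← Matrix.mul_assoc]
    rw [← hMdef, mul_nonsing_inv _ hM, Matrix.one_mul]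
  have hQ : Vᵀ * Q = W := by
    rw [← transpose_transpose (Vᵀ * Q), transpose_mul, transpose_transpose, transpose_transpose,
      Matrix.mul_assoc _ (Uᵀ * A), ← hMdef, nonsing_inv_mul_cancel_right _ _ hM, hWdef,
      transpose_mul, transpose_transpose]
  have hH : IsUnit H := by
    rw [isUnit_iff_isUnit_det, det_mul, det_mul]
    exact ((isUnit_nonsing_inv_det _ hU).mul hM).mul (isUnit_nonsing_inv_det _ hV)
  have hPHQ : A = P * H * Qᵀ := by
    conv_lhs => rw [key]
    simp only [P, H, Q, transpose_transpose, Matrix.mul_assoc,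
      mul_nonsing_inv_cancel_left _ _ hU, nonsing_inv_mul_cancel_left _ _ hV,
      nonsing_inv_mul_cancel_left _ _ hM]
  refine ⟨pinv Uperp * P, pinv Vperp * Q, H, hH, ?_⟩
  rw [← eq_add_mul_pinv_mul_of_transpose_mul_eq hprojU hU hP,
    ← eq_add_mul_pinv_mul_of_transpose_mul_eq hprojV hV hQ]
  exact hPHQ

theorem chart_eq_of_eq [DecidableEq σ] [DecidableEq τ] {X : Matrix σ ρ K} {Y : Matrix τ ρ K}
    {H : Matrix ρ ρ K} (hU : IsUnit (Uᵀ * U).det) (hV : IsUnit (Vᵀ * V).det)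
    (hUperp : IsUnit (Uperpᵀ * Uperp).det) (hVperp : IsUnit (Vperpᵀ * Vperp).det)
    (horthU : Uᵀ * Uperp = 0) (horthV : Vᵀ * Vperp = 0) (hH : IsUnit H)
    (hA : A = (U + Uperp * X) * H * (V + Vperp * Y)ᵀ) :
    H = pinv U * A * (pinv V)ᵀ ∧ X = pinv Uperp * A * (pinv V)ᵀ * H⁻¹ ∧
      Y = pinv Vperp * Aᵀ * (pinv U)ᵀ * Hᵀ⁻¹ := by
  have hHdet : IsUnit H.det := (isUnit_iff_isUnit_det H).mp hH
  have hAT : Aᵀ = (V + Vperp * Y) * Hᵀ * (U + Uperp * X)ᵀ := by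
    rw [hA]; simp only [transpose_mul, transpose_transpose, Matrix.mul_assoc]
  refine ⟨?_, ?_, ?_⟩
  · calc H = pinv U * (U + Uperp * X) * H * (pinv V * (V + Vperp * Y))ᵀ := by
          rw [pinv_mul_add_mul hU horthU, pinv_mul_add_mul hV horthV, transpose_one,
            Matrix.one_mul, Matrix.mul_one]
      _ = pinv U * A * (pinv V)ᵀ := by rw [hA]; simp only [transpose_mul, Matrix.mul_assoc]
  · calc X = pinv Uperp * (U + Uperp * X) * H * (pinv V * (V + Vperp * Y))ᵀ * H⁻¹ := by
          rw [pinv_mul_add_mul_right hUperp horthU, pinv_mul_add_mul hV horthV, transpose_one,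
            Matrix.mul_one, mul_nonsing_inv_cancel_right _ _ hHdet]
      _ = pinv Uperp * A * (pinv V)ᵀ * H⁻¹ := by
          rw [hA]; simp only [transpose_mul, Matrix.mul_assoc]
  · calc Y = pinv Vperp * (V + Vperp * Y) * Hᵀ * (pinv U * (U + Uperp * X))ᵀ * Hᵀ⁻¹ := by
          rw [pinv_mul_add_mul_right hVperp horthV, pinv_mul_add_mul hU horthU, transpose_one,
            Matrix.mul_one, mul_nonsing_inv_cancel_right _ _ (by rwa [det_transpose])]
      _ = pinv Vperp * Aᵀ * (pinv U)ᵀ * Hᵀ⁻¹ := by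
          rw [hAT]; simp only [transpose_mul, Matrix.mul_assoc]

end chart

end Matrix

theorem stmt15_general (n m r : ℕ)
    (U : Matrix (Fin n) (Fin r) ℝ) (hU : U.rank = r)
    (V : Matrix (Fin m) (Fin r) ℝ) (hV : V.rank = r)
    (Uperp : Matrix (Fin n) (Fin (n - r)) ℝ) (hUperp : Uperp.rank = n - r)
    (Vperp : Matrix (Fin m) (Fin (m - r)) ℝ) (hVperp : Vperp.rank = m - r)
    (horthU : Uᵀ * Uperp = 0) (horthV : Vᵀ * Vperp = 0)
    (A : Matrix (Fin n) (Fin m) ℝ) :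
    ((A.rank = r ∧ (Uᵀ * A * V).det ≠ 0) ↔
      ∃ (X : Matrix (Fin (n - r)) (Fin r) ℝ) (Y : Matrix (Fin (m - r)) (Fin r) ℝ)
        (H : Matrix (Fin r) (Fin r) ℝ),
        IsUnit H ∧ A = (U + Uperp * X) * H * (V + Vperp * Y)ᵀ) ∧
    (∀ (X : Matrix (Fin (n - r)) (Fin r) ℝ) (Y : Matrix (Fin (m - r)) (Fin r) ℝ)
        (H : Matrix (Fin r) (Fin r) ℝ),
      IsUnit H → A = (U + Uperp * X) * H * (V + Vperp * Y)ᵀ →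
        H = (Uᵀ * U)⁻¹ * Uᵀ * A * ((Vᵀ * V)⁻¹ * Vᵀ)ᵀ ∧
        X = (Uperpᵀ * Uperp)⁻¹ * Uperpᵀ * A * ((Vᵀ * V)⁻¹ * Vᵀ)ᵀ * H⁻¹ ∧
        Y = (Vperpᵀ * Vperp)⁻¹ * Vperpᵀ * Aᵀ * ((Uᵀ * U)⁻¹ * Uᵀ)ᵀ * (Hᵀ)⁻¹) := by
  have hUU := isUnit_det_transpose_mul_self_of_rank_eq (hU.trans (Fintype.card_fin r).symm)
  have hVV := isUnit_det_transpose_mul_self_of_rank_eq (hV.trans (Fintype.card_fin r).symm)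
  have hUpUp :=
    isUnit_det_transpose_mul_self_of_rank_eq (hUperp.trans (Fintype.card_fin _).symm)
  have hVpVp :=
    isUnit_det_transpose_mul_self_of_rank_eq (hVperp.trans (Fintype.card_fin _).symm)
  have hrn : r ≤ n := hU ▸ U.rank_le_height
  have hrm : r ≤ m := hV ▸ V.rank_le_height
  have hprojU := mul_pinv_add_mul_pinv_eq_one (by simp only [Fintype.card_fin]; omega)
    hUU hUpUp horthU
  have hprojV := mul_pinv_add_mul_pinv_eq_one (by simp only [Fintype.card_fin]; omega)
    hVV hVpVp horthV
  refine ⟨⟨fun ⟨hA, hdet⟩ => exists_eq_chart_of_rank_eq hprojU hprojV hUU hVV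
      (hA.trans (Fintype.card_fin r).symm) hdet.isUnit, fun ⟨X, Y, H, hH, hA⟩ => ?_⟩,
    fun X Y H hH hA => chart_eq_of_eq hUU hVV hUpUp hVpVp horthU horthV hH hA⟩
  obtain ⟨hrank, hdet⟩ := rank_eq_and_isUnit_det_of_eq_chart hUU hVV horthU horthV hH hA
  exact ⟨hrank.trans (Fintype.card_fin r), hdet.ne_zero⟩

/-- `A` has rank `r` and `det (Uᵀ A V) ≠ 0` iff
`A = (U + U_⊥ X) H (V + V_⊥ Y)ᵀ` with `H` invertible; moreover the triple `(X, Y, H)` is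
unique, given by `H = U⁺ A (V⁺)ᵀ`, `X = U_⊥⁺ A (V⁺)ᵀ H⁻¹`, `Y = V_⊥⁺ Aᵀ (U⁺)ᵀ (Hᵀ)⁻¹`. -/
theorem stmt15 (n m r : ℕ) (hr : 0 < r) (hrn : r < n) (hrm : r < m)
    (U : Matrix (Fin n) (Fin r) ℝ) (hU : U.rank = r)
    (V : Matrix (Fin m) (Fin r) ℝ) (hV : V.rank = r)
    (Uperp : Matrix (Fin n) (Fin (n - r)) ℝ) (hUperp : Uperp.rank = n - r)
    (Vperp : Matrix (Fin m) (Fin (m - r)) ℝ) (hVperp : Vperp.rank = m - r)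
    (horthU : Uᵀ * Uperp = 0) (horthV : Vᵀ * Vperp = 0)
    (A : Matrix (Fin n) (Fin m) ℝ) :
    ((A.rank = r ∧ (Uᵀ * A * V).det ≠ 0) ↔
      ∃ (X : Matrix (Fin (n - r)) (Fin r) ℝ) (Y : Matrix (Fin (m - r)) (Fin r) ℝ)
        (H : Matrix (Fin r) (Fin r) ℝ),
        IsUnit H ∧ A = (U + Uperp * X) * H * (V + Vperp * Y)ᵀ) ∧
    (∀ (X : Matrix (Fin (n - r)) (Fin r) ℝ) (Y : Matrix (Fin (m - r)) (Fin r) ℝ)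
        (H : Matrix (Fin r) (Fin r) ℝ),
      IsUnit H → A = (U + Uperp * X) * H * (V + Vperp * Y)ᵀ →
        H = (Uᵀ * U)⁻¹ * Uᵀ * A * ((Vᵀ * V)⁻¹ * Vᵀ)ᵀ ∧
        X = (Uperpᵀ * Uperp)⁻¹ * Uperpᵀ * A * ((Vᵀ * V)⁻¹ * Vᵀ)ᵀ * H⁻¹ ∧
        Y = (Vperpᵀ * Vperp)⁻¹ * Vperpᵀ * Aᵀ * ((Uᵀ * U)⁻¹ * Uᵀ)ᵀ * (Hᵀ)⁻¹) :=
  stmt15_general n m r U hU V hV Uperp hUperp Vperp hVperp horthU horthV A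
end

section
/- Let G ∈ ℝ^{r×r} be invertible, and consider the linear map T : ℝ^{(n−r)×r} × ℝ^{(m−r)×r} × ℝ^{r×r} → ℝ^{n×m} given by T(Ẋ, Ẏ, Ḣ) = U_⊥ẊGVᵀ + UG(V_⊥Ẏ)ᵀ + UḢVᵀ. Then the linear map L : ℝ^{n×m} → ℝ^{(n−r)×r} × ℝ^{(m−r)×r} × ℝ^{r×r} given by L(Ż) = (U_⊥⁺Ż(V⁺)ᵀG⁻¹, V_⊥⁺Żᵀ(U⁺)ᵀ(Gᵀ)⁻¹, U⁺Ż(V⁺)ᵀ) satisfies L ∘ T = id; in particular T is injective. -/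
open Matrix

theorem aux_unit {k r : ℕ} (A : Matrix (Fin k) (Fin r) ℝ) (h : A.rank = r) :
    IsUnit (Aᵀ * A) := by
  have h1 : (Aᵀ * A).rank = r := by rw [Matrix.rank_transpose_mul_self, h]
  rw [← Matrix.mulVec_surjective_iff_isUnit]
  have h2 : LinearMap.range (Aᵀ * A).mulVecLin = ⊤ := by
    apply Submodule.eq_top_of_finrank_eq
    simpa [Matrix.rank] using h1
  intro y
  exact LinearMap.range_eq_top.mp h2 y

theorem aux_zero {p q : ℕ} {l s : Type*} (A : Matrix l (Fin p) ℝ) (B : Matrix (Fin p) (Fin q) ℝ)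
    (h : A * B = 0) (C : Matrix (Fin q) s ℝ) : A * (B * C) = 0 := by
  rw [← Matrix.mul_assoc, h, Matrix.zero_mul]

theorem aux_one {p q : ℕ} {s : Type*} (A : Matrix (Fin q) (Fin p) ℝ) (B : Matrix (Fin p) (Fin q) ℝ)
    (h : A * B = 1) (C : Matrix (Fin q) s ℝ) : A * (B * C) = C := by
  rw [← Matrix.mul_assoc, h, Matrix.one_mul]

/-- the linear map `L` is a left inverse of the tangent parametrisation
`T (Ẋ, Ẏ, Ḣ) = U_⊥ Ẋ G Vᵀ + U G (V_⊥ Ẏ)ᵀ + U Ḣ Vᵀ`; in particular `T` is injective. -/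
theorem stmt16 (n m r : ℕ) (hr : 0 < r) (hrn : r < n) (hrm : r < m)
    (U : Matrix (Fin n) (Fin r) ℝ) (hU : U.rank = r)
    (V : Matrix (Fin m) (Fin r) ℝ) (hV : V.rank = r)
    (Uperp : Matrix (Fin n) (Fin (n - r)) ℝ) (hUperp : Uperp.rank = n - r)
    (Vperp : Matrix (Fin m) (Fin (m - r)) ℝ) (hVperp : Vperp.rank = m - r)
    (horthU : Uᵀ * Uperp = 0) (horthV : Vᵀ * Vperp = 0)
    (G : Matrix (Fin r) (Fin r) ℝ) (hG : IsUnit G) :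
    (∀ (Xdot : Matrix (Fin (n - r)) (Fin r) ℝ) (Ydot : Matrix (Fin (m - r)) (Fin r) ℝ)
        (Hdot : Matrix (Fin r) (Fin r) ℝ),
      (Uperpᵀ * Uperp)⁻¹ * Uperpᵀ *
          (Uperp * Xdot * G * Vᵀ + U * G * (Vperp * Ydot)ᵀ + U * Hdot * Vᵀ) *
          ((Vᵀ * V)⁻¹ * Vᵀ)ᵀ * G⁻¹ = Xdot ∧
      (Vperpᵀ * Vperp)⁻¹ * Vperpᵀ *
          (Uperp * Xdot * G * Vᵀ + U * G * (Vperp * Ydot)ᵀ + U * Hdot * Vᵀ)ᵀ *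
          ((Uᵀ * U)⁻¹ * Uᵀ)ᵀ * (Gᵀ)⁻¹ = Ydot ∧
      (Uᵀ * U)⁻¹ * Uᵀ *
          (Uperp * Xdot * G * Vᵀ + U * G * (Vperp * Ydot)ᵀ + U * Hdot * Vᵀ) *
          ((Vᵀ * V)⁻¹ * Vᵀ)ᵀ = Hdot) ∧
    Function.Injective
      (fun t : Matrix (Fin (n - r)) (Fin r) ℝ × Matrix (Fin (m - r)) (Fin r) ℝ ×
          Matrix (Fin r) (Fin r) ℝ =>
        Uperp * t.1 * G * Vᵀ + U * G * (Vperp * t.2.1)ᵀ + U * t.2.2 * Vᵀ) := by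
  -- units
  have hUU : IsUnit (Uᵀ * U) := aux_unit U hU
  have hVV : IsUnit (Vᵀ * V) := aux_unit V hV
  have hUpUp : IsUnit (Uperpᵀ * Uperp) := aux_unit Uperp hUperp
  have hVpVp : IsUnit (Vperpᵀ * Vperp) := aux_unit Vperp hVperp
  -- basic products
  have horthU' : Uperpᵀ * U = 0 := by
    have := congrArg Matrix.transpose horthU
    simpa [Matrix.transpose_mul] using this
  have horthV' : Vperpᵀ * V = 0 := by
    have := congrArg Matrix.transpose horthV
    simpa [Matrix.transpose_mul] using this
  have hGG : G * G⁻¹ = 1 := Matrix.mul_nonsing_inv G (Matrix.isUnit_iff_isUnit_det G |>.mp hG)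
  have hGtGt : Gᵀ * (Gᵀ)⁻¹ = 1 := by
    rw [← Matrix.transpose_nonsing_inv, ← Matrix.transpose_mul,
      Matrix.nonsing_inv_mul G (Matrix.isUnit_iff_isUnit_det G |>.mp hG), Matrix.transpose_one]
  -- cancellation lemmas
  have kUp : ∀ {s : Type} (C : Matrix (Fin (n - r)) s ℝ),
      (Uperpᵀ * Uperp)⁻¹ * (Uperpᵀ * (Uperp * C)) = C := by
    intro s C
    rw [← Matrix.mul_assoc Uperpᵀ Uperp C, ← Matrix.mul_assoc,
      Matrix.nonsing_inv_mul _ (Matrix.isUnit_iff_isUnit_det _ |>.mp hUpUp), Matrix.one_mul]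
  have kUpU : ∀ {s : Type} (C : Matrix (Fin r) s ℝ),
      (Uperpᵀ * Uperp)⁻¹ * (Uperpᵀ * (U * C)) = 0 := by
    intro s C
    rw [aux_zero _ _ horthU' C, Matrix.mul_zero]
  have kVp : ∀ {s : Type} (C : Matrix (Fin (m - r)) s ℝ),
      (Vperpᵀ * Vperp)⁻¹ * (Vperpᵀ * (Vperp * C)) = C := by
    intro s C
    rw [← Matrix.mul_assoc Vperpᵀ Vperp C, ← Matrix.mul_assoc,
      Matrix.nonsing_inv_mul _ (Matrix.isUnit_iff_isUnit_det _ |>.mp hVpVp), Matrix.one_mul]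
  have kVpV : ∀ {s : Type} (C : Matrix (Fin r) s ℝ),
      (Vperpᵀ * Vperp)⁻¹ * (Vperpᵀ * (V * C)) = 0 := by
    intro s C
    rw [aux_zero _ _ horthV' C, Matrix.mul_zero]
  have kU : ∀ {s : Type} (C : Matrix (Fin r) s ℝ),
      (Uᵀ * U)⁻¹ * (Uᵀ * (U * C)) = C := by
    intro s C
    rw [← Matrix.mul_assoc Uᵀ U C, ← Matrix.mul_assoc,
      Matrix.nonsing_inv_mul _ (Matrix.isUnit_iff_isUnit_det _ |>.mp hUU), Matrix.one_mul]
  have kUUp : ∀ {s : Type} (C : Matrix (Fin (n - r)) s ℝ),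
      (Uᵀ * U)⁻¹ * (Uᵀ * (Uperp * C)) = 0 := by
    intro s C
    rw [aux_zero _ _ horthU C, Matrix.mul_zero]
  -- the transposed pseudo-inverse identities
  have hVpInv : Vᵀ * ((Vᵀ * V)⁻¹ * Vᵀ)ᵀ = 1 := by
    rw [Matrix.transpose_mul, ← Matrix.mul_assoc, Matrix.transpose_nonsing_inv,
      Matrix.transpose_mul, Matrix.transpose_transpose,
      Matrix.mul_nonsing_inv _ (Matrix.isUnit_iff_isUnit_det _ |>.mp hVV)]
  have kVt : ∀ {s : Type} (C : Matrix (Fin r) s ℝ),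
      Vᵀ * (((Vᵀ * V)⁻¹ * Vᵀ)ᵀ * C) = C := fun C => aux_one _ _ hVpInv C
  have hUpInv : Uᵀ * ((Uᵀ * U)⁻¹ * Uᵀ)ᵀ = 1 := by
    rw [Matrix.transpose_mul, ← Matrix.mul_assoc, Matrix.transpose_nonsing_inv,
      Matrix.transpose_mul, Matrix.transpose_transpose,
      Matrix.mul_nonsing_inv _ (Matrix.isUnit_iff_isUnit_det _ |>.mp hUU)]
  have kUt : ∀ {s : Type} (C : Matrix (Fin r) s ℝ),
      Uᵀ * (((Uᵀ * U)⁻¹ * Uᵀ)ᵀ * C) = C := fun C => aux_one _ _ hUpInv C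
  -- the left-inverse property
  have key : ∀ (Xdot : Matrix (Fin (n - r)) (Fin r) ℝ) (Ydot : Matrix (Fin (m - r)) (Fin r) ℝ)
      (Hdot : Matrix (Fin r) (Fin r) ℝ),
      (Uperpᵀ * Uperp)⁻¹ * Uperpᵀ *
          (Uperp * Xdot * G * Vᵀ + U * G * (Vperp * Ydot)ᵀ + U * Hdot * Vᵀ) *
          ((Vᵀ * V)⁻¹ * Vᵀ)ᵀ * G⁻¹ = Xdot ∧
      (Vperpᵀ * Vperp)⁻¹ * Vperpᵀ *
          (Uperp * Xdot * G * Vᵀ + U * G * (Vperp * Ydot)ᵀ + U * Hdot * Vᵀ)ᵀ *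
          ((Uᵀ * U)⁻¹ * Uᵀ)ᵀ * (Gᵀ)⁻¹ = Ydot ∧
      (Uᵀ * U)⁻¹ * Uᵀ *
          (Uperp * Xdot * G * Vᵀ + U * G * (Vperp * Ydot)ᵀ + U * Hdot * Vᵀ) *
          ((Vᵀ * V)⁻¹ * Vᵀ)ᵀ = Hdot := by
    intro Xdot Ydot Hdot
    have hinvU : ((Uᵀ * U)⁻¹)ᵀ = (Uᵀ * U)⁻¹ := by
      rw [Matrix.transpose_nonsing_inv, Matrix.transpose_mul, Matrix.transpose_transpose]
    have hinvV : ((Vᵀ * V)⁻¹)ᵀ = (Vᵀ * V)⁻¹ := by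
      rw [Matrix.transpose_nonsing_inv, Matrix.transpose_mul, Matrix.transpose_transpose]
    have kUright : ∀ {s : Type} (C : Matrix (Fin r) s ℝ),
        Uᵀ * (U * ((Uᵀ * U)⁻¹ * C)) = C := by
      intro s C
      rw [← Matrix.mul_assoc U _ C, ← Matrix.mul_assoc, ← Matrix.mul_assoc,
        Matrix.mul_nonsing_inv _ (Matrix.isUnit_iff_isUnit_det _ |>.mp hUU), Matrix.one_mul]
    have kVright : ∀ {s : Type} (C : Matrix (Fin r) s ℝ),
        Vᵀ * (V * ((Vᵀ * V)⁻¹ * C)) = C := by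
      intro s C
      rw [← Matrix.mul_assoc V _ C, ← Matrix.mul_assoc, ← Matrix.mul_assoc,
        Matrix.mul_nonsing_inv _ (Matrix.isUnit_iff_isUnit_det _ |>.mp hVV), Matrix.one_mul]
    have hVVinv : Vᵀ * (V * (Vᵀ * V)⁻¹) = 1 := by
      rw [← Matrix.mul_assoc,
        Matrix.mul_nonsing_inv _ (Matrix.isUnit_iff_isUnit_det _ |>.mp hVV)]
    have zVpV : ∀ {s : Type} (C : Matrix (Fin r) s ℝ), Vperpᵀ * (V * C) = 0 := by
      intro s C; exact aux_zero _ _ horthV' C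
    refine ⟨?_, ?_, ?_⟩
    · simp only [Matrix.transpose_mul, Matrix.transpose_transpose, hinvV,
        Matrix.add_mul, Matrix.mul_add, Matrix.mul_assoc, kUp, kUpU, kVright, hGG,
        Matrix.zero_mul, Matrix.mul_zero, add_zero, zero_add, Matrix.mul_one]
    · simp only [Matrix.transpose_add, Matrix.transpose_mul, Matrix.transpose_transpose, hinvU,
        Matrix.add_mul, Matrix.mul_add, Matrix.mul_assoc, kVp, kVpV, kUright, hGtGt,
        Matrix.zero_mul, Matrix.mul_zero, add_zero, zero_add, Matrix.mul_one]
    · simp only [Matrix.transpose_mul, Matrix.transpose_transpose, hinvV,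
        Matrix.add_mul, Matrix.mul_add, Matrix.mul_assoc, kU, kUUp, zVpV, hVVinv,
        Matrix.zero_mul, Matrix.mul_zero, add_zero, zero_add, Matrix.mul_one]
  refine ⟨key, ?_⟩
  intro t s hts
  obtain ⟨k1, k2, k3⟩ := key t.1 t.2.1 t.2.2
  obtain ⟨l1, l2, l3⟩ := key s.1 s.2.1 s.2.2
  simp only at hts
  have e1 : t.1 = s.1 := by rw [← k1, ← l1, hts]
  have e2 : t.2.1 = s.2.1 := by rw [← k2, ← l2, hts]
  have e3 : t.2.2 = s.2.2 := by rw [← k3, ← l3, hts]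
  exact Prod.ext e1 (Prod.ext e2 e3)
end

section
/- Let X ∈ ℝ^{(n−r)×r}, Y ∈ ℝ^{(m−r)×r}, and let H ∈ ℝ^{r×r} be invertible. Then the linear map from ℝ^{(n−r)×r} × ℝ^{(m−r)×r} × ℝ^{r×r} to ℝ^{n×m} given by (Ẋ, Ẏ, Ḣ) ↦ (U_⊥Ẋ)H(V + V_⊥Y)ᵀ + (U + U_⊥X)H(V_⊥Ẏ)ᵀ + (U + U_⊥X)Ḣ(V + V_⊥Y)ᵀ is injective. -/
open Matrix

lemma full_rank_left_cancel {k N p : ℕ} (M : Matrix (Fin N) (Fin k) ℝ) (h : M.rank = k)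
    (A : Matrix (Fin k) (Fin p) ℝ) (hA : M * A = 0) : A = 0 := by
  have hinj : Function.Injective M.mulVecLin := by
    rw [← LinearMap.ker_eq_bot]
    have h1 := M.mulVecLin.finrank_range_add_finrank_ker
    rw [Module.finrank_pi] at h1
    have hr : Module.finrank ℝ (LinearMap.range M.mulVecLin) = k := h
    rw [hr, Fintype.card_fin] at h1
    have : Module.finrank ℝ (LinearMap.ker M.mulVecLin) = 0 := by omega
    exact Submodule.finrank_eq_zero.mp this
  ext i j
  have : M.mulVec (fun l => A l j) = M.mulVec 0 := by
    funext i'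
    have := congrFun (congrFun hA i') j
    simpa [Matrix.mul_apply, Matrix.mulVec, dotProduct] using this
  have := congrFun (hinj this) i
  simpa using this

/-- the differential of the chart parametrisation at `(X, Y, H)` is
injective. -/
theorem stmt17 (n m r : ℕ) (hr : 0 < r) (hrn : r < n) (hrm : r < m)
    (U : Matrix (Fin n) (Fin r) ℝ) (hU : U.rank = r)
    (V : Matrix (Fin m) (Fin r) ℝ) (hV : V.rank = r)
    (Uperp : Matrix (Fin n) (Fin (n - r)) ℝ) (hUperp : Uperp.rank = n - r)
    (Vperp : Matrix (Fin m) (Fin (m - r)) ℝ) (hVperp : Vperp.rank = m - r)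
    (horthU : Uᵀ * Uperp = 0) (horthV : Vᵀ * Vperp = 0)
    (X : Matrix (Fin (n - r)) (Fin r) ℝ) (Y : Matrix (Fin (m - r)) (Fin r) ℝ)
    (H : Matrix (Fin r) (Fin r) ℝ) (hH : IsUnit H) :
    Function.Injective
      (fun t : Matrix (Fin (n - r)) (Fin r) ℝ × Matrix (Fin (m - r)) (Fin r) ℝ ×
          Matrix (Fin r) (Fin r) ℝ =>
        (Uperp * t.1) * H * (V + Vperp * Y)ᵀ + (U + Uperp * X) * H * (Vperp * t.2.1)ᵀ +
          (U + Uperp * X) * t.2.2 * (V + Vperp * Y)ᵀ) := by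
  have hUU : (Uᵀ * U).rank = r := by rw [Matrix.rank_transpose_mul_self, hU]
  have hVV : (Vᵀ * V).rank = r := by rw [Matrix.rank_transpose_mul_self, hV]
  have hVpU : Vperpᵀ * V = 0 := by
    have := congrArg Matrix.transpose horthV
    simpa using this
  have hUpU : Uperpᵀ * U = 0 := by
    have := congrArg Matrix.transpose horthU
    simpa using this
  have key : ∀ t : Matrix (Fin (n - r)) (Fin r) ℝ × Matrix (Fin (m - r)) (Fin r) ℝ ×
      Matrix (Fin r) (Fin r) ℝ,
      (Uperp * t.1) * H * (V + Vperp * Y)ᵀ + (U + Uperp * X) * H * (Vperp * t.2.1)ᵀ +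
        (U + Uperp * X) * t.2.2 * (V + Vperp * Y)ᵀ = 0 → t = 0 := by
    rintro ⟨t1, t2, t3⟩ hE
    simp only at hE
    -- Step 1: t3 = 0
    have e1 : Uᵀ * ((Uperp * t1) * H * (V + Vperp * Y)ᵀ + (U + Uperp * X) * H * (Vperp * t2)ᵀ +
        (U + Uperp * X) * t3 * (V + Vperp * Y)ᵀ) * V = 0 := by rw [hE]; simp
    have e1' : (Uᵀ * U) * (t3 * (Vᵀ * V)) = 0 := by
      have expand : Uᵀ * ((Uperp * t1) * H * (V + Vperp * Y)ᵀ + (U + Uperp * X) * H * (Vperp * t2)ᵀ +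
          (U + Uperp * X) * t3 * (V + Vperp * Y)ᵀ) * V = (Uᵀ * U) * (t3 * (Vᵀ * V)) := by
        simp only [Matrix.mul_add, Matrix.add_mul, Matrix.transpose_add, Matrix.transpose_mul,
          ← Matrix.mul_assoc]
        rw [horthU]
        simp only [Matrix.zero_mul, Matrix.mul_assoc]
        rw [show Vperpᵀ * V = 0 from hVpU]
        simp [Matrix.mul_assoc, show Uᵀ * Uperp = 0 from horthU]
      rw [← expand, e1]
    have ht3a : t3 * (Vᵀ * V) = 0 := full_rank_left_cancel _ hUU _ e1'
    have ht3 : t3 = 0 := by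
      have : (Vᵀ * V) * t3ᵀ = 0 := by
        have := congrArg Matrix.transpose ht3a
        simpa [Matrix.transpose_mul] using this
      have := full_rank_left_cancel _ hVV _ this
      simpa using congrArg Matrix.transpose this
    -- Step 2: t2 = 0
    have e2 : Uᵀ * ((Uperp * t1) * H * (V + Vperp * Y)ᵀ + (U + Uperp * X) * H * (Vperp * t2)ᵀ +
        (U + Uperp * X) * t3 * (V + Vperp * Y)ᵀ) = 0 := by rw [hE]; simp
    have e2' : (Uᵀ * U) * (H * (Vperp * t2)ᵀ) = 0 := by
      rw [ht3] at e2
      have expand : Uᵀ * ((Uperp * t1) * H * (V + Vperp * Y)ᵀ + (U + Uperp * X) * H * (Vperp * t2)ᵀ +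
          (U + Uperp * X) * (0 : Matrix (Fin r) (Fin r) ℝ) * (V + Vperp * Y)ᵀ) =
          (Uᵀ * U) * (H * (Vperp * t2)ᵀ) := by
        simp only [Matrix.mul_add, Matrix.add_mul, Matrix.mul_zero, Matrix.zero_mul,
          ← Matrix.mul_assoc]
        rw [horthU]
        simp [Matrix.mul_assoc]
      rw [← expand, e2]
    have ht2a : H * (Vperp * t2)ᵀ = 0 := full_rank_left_cancel _ hUU _ e2'
    have ht2b : (Vperp * t2)ᵀ = 0 := by
      have := congrArg (fun M => (hH.unit⁻¹ : Matrix (Fin r) (Fin r) ℝ) * M) ht2a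
      simpa [← Matrix.mul_assoc, Matrix.nonsing_inv_mul H ((Matrix.isUnit_iff_isUnit_det H).mp hH)] using this
    have ht2 : t2 = 0 := by
      have : Vperp * t2 = 0 := by
        have := congrArg Matrix.transpose ht2b
        simpa using this
      exact full_rank_left_cancel _ hVperp _ this
    -- Step 3: t1 = 0
    have e3 : ((Uperp * t1) * H * (V + Vperp * Y)ᵀ + (U + Uperp * X) * H * (Vperp * t2)ᵀ +
        (U + Uperp * X) * t3 * (V + Vperp * Y)ᵀ) * V = 0 := by rw [hE]; simp
    have e3' : Uperp * (t1 * H * (Vᵀ * V)) = 0 := by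
      rw [ht2, ht3] at e3
      have expand : ((Uperp * t1) * H * (V + Vperp * Y)ᵀ +
          (U + Uperp * X) * H * (Vperp * (0 : Matrix (Fin (m - r)) (Fin r) ℝ))ᵀ +
          (U + Uperp * X) * (0 : Matrix (Fin r) (Fin r) ℝ) * (V + Vperp * Y)ᵀ) * V =
          Uperp * (t1 * H * (Vᵀ * V)) := by
        simp only [Matrix.mul_zero, Matrix.zero_mul, Matrix.mul_add, Matrix.add_mul,
          Matrix.transpose_add, Matrix.transpose_mul, Matrix.transpose_zero, Matrix.mul_assoc]
        rw [hVpU]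
        simp [Matrix.mul_assoc]
      rw [← expand, e3]
    have ht1a : t1 * H * (Vᵀ * V) = 0 := full_rank_left_cancel _ hUperp _ e3'
    have ht1b : (Vᵀ * V) * (Hᵀ * t1ᵀ) = 0 := by
      have := congrArg Matrix.transpose ht1a
      simpa [Matrix.transpose_mul, Matrix.mul_assoc] using this
    have ht1c : Hᵀ * t1ᵀ = 0 := full_rank_left_cancel _ hVV _ ht1b
    have ht1 : t1 = 0 := by
      have hHt : IsUnit Hᵀ := (Matrix.isUnit_transpose _).mpr hH
      have : t1ᵀ = 0 := by
        have := congrArg (fun M => (hHt.unit⁻¹ : Matrix (Fin r) (Fin r) ℝ) * M) ht1c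
        simpa [← Matrix.mul_assoc,
          Matrix.nonsing_inv_mul Hᵀ ((Matrix.isUnit_iff_isUnit_det Hᵀ).mp hHt)] using this
      simpa using congrArg Matrix.transpose this
    exact Prod.ext ht1 (Prod.ext ht2 ht3)
  intro a b hab
  have hd := key (a.1 - b.1, a.2.1 - b.2.1, a.2.2 - b.2.2)
  simp only at hd hab
  have : a.1 - b.1 = 0 ∧ (a.2.1 - b.2.1 = 0 ∧ a.2.2 - b.2.2 = 0) := by
    have h0 := hd (by
      simp only [Matrix.mul_sub, Matrix.sub_mul, Matrix.transpose_sub]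
      rw [sub_add_sub_comm, sub_add_sub_comm, hab, sub_self])
    exact ⟨congrArg Prod.fst h0, congrArg Prod.fst (congrArg Prod.snd h0),
      congrArg Prod.snd (congrArg Prod.snd h0)⟩
  obtain ⟨h1, h2, h3⟩ := this
  exact Prod.ext (sub_eq_zero.mp h1) (Prod.ext (sub_eq_zero.mp h2) (sub_eq_zero.mp h3))
end
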